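/- arXiv:2401.10103 — 12 statements merged into one kernel-verified Lean document; each statement's English description precedes it below -/
import Mathlib

section
/- Let X be a real normed space and C, K nontrivial cones in X. If C is convex and the pair (C, K) has the strict separation property, then C has a bounded base. -/
open Set Metric Pointwise

namespace HenigPaper

variable {X : Type*} [NormedAddCommGroup X] [NormedSpace ℝ X]

/-- `C` is a cone: closed under multiplication by nonnegative scalars. -/
def IsCone (C : Set X) : Prop :=
  ∀ ⦃l : ℝ⦄, 0 ≤ l → ∀ ⦃x⦄, x ∈ C → l • x ∈ C

/-- `C` is a nontrivial cone: `{0} ⊊ C ⊊ X`. -/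
def NontrivialCone (C : Set X) : Prop :=
  IsCone C ∧ ({(0 : X)} : Set X) ⊂ C ∧ C ≠ Set.univ

/-- A cone is pointed if `(-C) ∩ C = {0}`. -/
def PointedCone' (C : Set X) : Prop := (-C) ∩ C = ({(0 : X)} : Set X)

/-- Convexity of a cone in the sense `C + C = C`. -/
def ConeConvex (C : Set X) : Prop := C + C = C

/-- The strict separation property (SSP) for the pair of cones `(C, K)`. -/
def SSP (C K : Set X) : Prop :=
  (0 : X) ∉ closure (convexHull ℝ (C ∩ sphere (0 : X) 1) -
    convexHull ℝ ((frontier K ∩ sphere (0 : X) 1) ∪ {(0 : X)}))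

/-- The Bishop–Phelps cone `C(f, α) = {x : f x ≥ α ‖x‖}`. -/
def BPCone (f : X →L[ℝ] ℝ) (α : ℝ) : Set X := {x : X | α * ‖x‖ ≤ f x}

/-- The sublevel set `S(f, α) = {x : f x + α ‖x‖ ≤ 0}`. -/
def Ssub (f : X →L[ℝ] ℝ) (α : ℝ) : Set X := {x : X | f x + α * ‖x‖ ≤ 0}

/-- `f ∈ C^#`: strictly positive functionals on `C`. -/
def StrictlyPos (C : Set X) (f : X →L[ℝ] ℝ) : Prop :=
  ∀ x ∈ C, x ≠ 0 → 0 < f x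

/-- `(f, α) ∈ C^{a*}`: the augmented dual cone. -/
def MemAugDual (C : Set X) (f : X →L[ℝ] ℝ) (α : ℝ) : Prop :=
  StrictlyPos C f ∧ 0 ≤ α ∧ ∀ x ∈ C, α * ‖x‖ ≤ f x

/-- `(f, α) ∈ C^{a#}_+`. -/
def MemAugDualSharpPlus (C : Set X) (f : X →L[ℝ] ℝ) (α : ℝ) : Prop :=
  StrictlyPos C f ∧ 0 < α ∧ ∀ x ∈ C, x ≠ 0 → α * ‖x‖ < f x

/-- `B` is a base for the cone `C`. -/
def IsBase (C B : Set X) : Prop :=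
  B.Nonempty ∧ Convex ℝ B ∧ B ⊆ C ∧ (0 : X) ∉ closure B ∧
    ∀ x ∈ C, x ≠ (0 : X) → ∃! p : ℝ × X, 0 < p.1 ∧ p.2 ∈ B ∧ x = p.1 • p.2

/-- The cone `C` has a bounded base. -/
def HasBoundedBase (C : Set X) : Prop :=
  ∃ B : Set X, IsBase C B ∧ Bornology.IsBounded B

/-- The cone generated by a set `A`. -/
def coneGen (A : Set X) : Set X := {y : X | ∃ l : ℝ, 0 ≤ l ∧ ∃ a ∈ A, y = l • a}

/-- The `ε`-conic neighbourhood `C_ε` of a cone `C`. -/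
def epsCone (C : Set X) (ε : ℝ) : Set X :=
  coneGen {x : X | infDist x (C ∩ sphere (0 : X) 1) ≤ ε}

/-- `δ_B = inf {‖b‖ : b ∈ B}`. -/
noncomputable def deltaB (B : Set X) : ℝ := sInf ((fun b => ‖b‖) '' B)

/-- The Henig dilating cone `C_{(B,ε)}`. -/
def henigCone (B : Set X) (ε : ℝ) : Set X :=
  coneGen {x : X | infDist x B ≤ ε}

/-- The set of efficient (Pareto minimal) points of `A` with respect to the cone `C`. -/
def MinSet (A C : Set X) : Set X :=
  {x ∈ A | (A - ({x} : Set X)) ∩ (-C) = ({(0 : X)} : Set X)}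

/-- The set of Henig global proper efficient points of `A` with respect to `C`. -/
def GHe (A C : Set X) : Set X :=
  {x : X | ∃ K : Set X, IsCone K ∧ ConeConvex K ∧ C \ {(0 : X)} ⊆ interior K ∧
    x ∈ MinSet A K}

/-- A subset of `X` is weakly compact if it is compact in the weak topology. -/
def WeaklyCompact (A : Set X) : Prop :=
  IsCompact ((toWeakSpace ℝ X) '' A)

end HenigPaper

open HenigPaper

variable {X : Type*} [NormedAddCommGroup X] [NormedSpace ℝ X]


/-- If `C` is a nontrivial convex cone, `K` a nontrivial cone and `(C,K)` has the
strict separation property, then `C` has a bounded base. -/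
theorem stmt2 (C K : Set X) (hC : NontrivialCone C) (hK : NontrivialCone K)
    (hconv : ConeConvex C) (hssp : SSP C K) : HasBoundedBase C := by
  obtain ⟨hCcone, hC0, hCne⟩ := hC
  -- Step 1: 0 is not in the closure of the convex hull of C ∩ S
  have h0 : (0:X) ∉ closure (convexHull ℝ (C ∩ sphere (0:X) 1)) := by
    intro h
    apply hssp
    refine closure_mono ?_ h
    intro y hy
    exact ⟨y, hy, 0, subset_convexHull ℝ _ (Or.inr rfl), sub_zero y⟩
  -- Step 2: separate
  obtain ⟨f, u, hfu, hub⟩ := geometric_hahn_banach_point_closed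
    (convex_convexHull ℝ _).closure isClosed_closure h0
  have hu : 0 < u := by simpa using hfu
  -- unit vectors of C
  have hunit : ∀ x ∈ C, x ≠ (0:X) → (‖x‖⁻¹ • x) ∈ C ∩ sphere (0:X) 1 := by
    intro x hx hxne
    have hn : (0:ℝ) < ‖x‖ := norm_pos_iff.mpr hxne
    refine ⟨hCcone (by positivity) hx, ?_⟩
    rw [mem_sphere_zero_iff_norm, norm_smul, norm_inv, norm_norm,
      inv_mul_cancel₀ hn.ne']
  -- key inequality
  have hkey : ∀ x ∈ C, u * ‖x‖ ≤ f x := by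
    intro x hx
    rcases eq_or_ne x 0 with rfl | hxne
    · simp
    · have hn : (0:ℝ) < ‖x‖ := norm_pos_iff.mpr hxne
      have := hub _ (subset_closure (subset_convexHull ℝ _ (hunit x hx hxne)))
      rw [map_smul, smul_eq_mul] at this
      have h2 : u * ‖x‖ ≤ (‖x‖⁻¹ * f x) * ‖x‖ := by
        have := le_of_lt this
        nlinarith
      rw [mul_comm (‖x‖⁻¹) (f x), mul_assoc, inv_mul_cancel₀ hn.ne', mul_one] at h2
      exact h2
  have hfpos : ∀ x ∈ C, x ≠ (0:X) → 0 < f x := by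
    intro x hx hxne
    have hn : (0:ℝ) < ‖x‖ := norm_pos_iff.mpr hxne
    have := hkey x hx
    nlinarith
  -- C is convex
  have hCconv : Convex ℝ C := by
    intro x hx y hy a b ha hb hab
    have : a • x + b • y ∈ C + C :=
      ⟨a • x, hCcone ha hx, b • y, hCcone hb hy, rfl⟩
    rwa [hconv] at this
  -- the base
  refine ⟨{x ∈ C | f x = 1}, ⟨?_, ?_, fun x hx => hx.1, ?_, ?_⟩, ?_⟩
  · -- nonempty
    obtain ⟨x0, hx0C, hx0ne⟩ := exists_of_ssubset hC0
    have hx0ne : x0 ≠ 0 := by simpa using hx0ne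
    have hf0 : 0 < f x0 := hfpos x0 hx0C hx0ne
    refine ⟨(f x0)⁻¹ • x0, hCcone (by positivity) hx0C, ?_⟩
    simp [map_smul, inv_mul_cancel₀ hf0.ne']
  · -- convex
    intro x hx y hy a b ha hb hab
    refine ⟨hCconv hx.1 hy.1 ha hb hab, ?_⟩
    simp [hx.2, hy.2, hab]
  · -- 0 ∉ closure
    intro h
    have hsub : closure {x ∈ C | f x = 1} ⊆ f ⁻¹' {1} :=
      closure_minimal (fun x hx => hx.2) (isClosed_singleton.preimage f.continuous)
    have : f (0:X) = 1 := hsub h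
    simp at this
  · -- unique representation
    intro x hx hxne
    have hf : 0 < f x := hfpos x hx hxne
    refine ⟨(f x, (f x)⁻¹ • x), ⟨hf, ⟨hCcone (by positivity) hx,
      by simp [map_smul, inv_mul_cancel₀ hf.ne']⟩, by
        rw [smul_smul, mul_inv_cancel₀ hf.ne', one_smul]⟩, ?_⟩
    rintro ⟨l, b⟩ ⟨hl, ⟨hbC, hfb⟩, hxb⟩
    have hlf : l = f x := by rw [hxb, map_smul, smul_eq_mul, hfb, mul_one]
    have hb : b = (f x)⁻¹ • x := by
      have h2 : l⁻¹ • x = b := by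
        rw [hxb, smul_smul, inv_mul_cancel₀ hl.ne', one_smul]
      rw [← h2, hlf]
    exact Prod.ext hlf hb
  · -- bounded
    refine Metric.isBounded_closedBall (x := (0:X)) (r := u⁻¹) |>.subset ?_
    intro x hx
    rw [Metric.mem_closedBall, dist_zero_right]
    have := hkey x hx.1
    rw [hx.2] at this
    have h1 : u * ‖x‖ ≤ u * u⁻¹ := by rw [mul_inv_cancel₀ hu.ne']; exact this
    exact le_of_mul_le_mul_left h1 hu
end

section
/- Let X be a real normed space, C ⊆ X a nontrivial cone, f ∈ X*, and α > 0 such that (f,α) ∈ C^{a*}. Then S(f,α) is a closed convex cone with a bounded base, and −C ⊆ S(f,α). -/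
open Set Metric Pointwise

open HenigPaper

variable {X : Type*} [NormedAddCommGroup X] [NormedSpace ℝ X]

/-!
Since `f x ≤ -α ‖x‖` on `S(f, α)`, the functional `-f` is strictly positive on `S(f, α) \ {0}`,
so the slice `{x ∈ S(f, α) | -f x = 1}` is a base; on it `α ‖x‖ ≤ 1`, so it is bounded.
It is nonempty because `-c ∈ S(f, α)` for every nonzero `c ∈ C`.
-/

namespace HenigPaper

section Base

variable {K : Set X} {g : X →L[ℝ] ℝ}

theorem IsCone.convex (hK : IsCone K) (hadd : ∀ a ∈ K, ∀ b ∈ K, a + b ∈ K) : Convex ℝ K :=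
  fun _ ha _ hb _ _ ht hs _ => hadd _ (hK ht ha) _ (hK hs hb)

theorem coneConvex_of_add_mem {E : Type*} [NormedAddCommGroup E] {K : Set E} (h0 : (0 : E) ∈ K)
    (hadd : ∀ a ∈ K, ∀ b ∈ K, a + b ∈ K) : ConeConvex K :=
  Subset.antisymm (by rintro _ ⟨a, ha, b, hb, rfl⟩; exact hadd a ha b hb)
    fun x hx => ⟨x, hx, 0, h0, add_zero x⟩

theorem zero_notMem_closure_levelSet (K : Set X) (g : X →L[ℝ] ℝ) :
    (0 : X) ∉ closure {x ∈ K | g x = 1} := by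
  intro h
  have hsub : closure {x ∈ K | g x = 1} ⊆ g ⁻¹' {1} :=
    closure_minimal (fun x hx => hx.2) (isClosed_singleton.preimage g.continuous)
  simpa using hsub h

theorem exists_unique_smul_levelSet (hK : IsCone K) {x : X} (hx : x ∈ K) (hgx : 0 < g x) :
    ∃! p : ℝ × X, 0 < p.1 ∧ p.2 ∈ {x ∈ K | g x = 1} ∧ x = p.1 • p.2 := by
  refine ⟨(g x, (g x)⁻¹ • x), ⟨hgx, ⟨hK (inv_nonneg.2 hgx.le) hx, ?_⟩, ?_⟩, ?_⟩
  · simp [map_smul, inv_mul_cancel₀ hgx.ne']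
  · simp [smul_smul, mul_inv_cancel₀ hgx.ne']
  · rintro ⟨l, b⟩ ⟨hl, ⟨-, hgb⟩, rfl⟩
    have hgl : g (l • b) = l := by simp [map_smul, hgb]
    simp only [hgl, smul_smul, inv_mul_cancel₀ hl.ne', one_smul]

theorem isBase_levelSet (hK : IsCone K) (hconv : Convex ℝ K)
    (hg : ∀ x ∈ K, x ≠ 0 → 0 < g x) {c : X} (hc : c ∈ K) (hc0 : c ≠ 0) :
    IsBase K {x ∈ K | g x = 1} := by
  have hgc := hg c hc hc0
  refine ⟨⟨(g c)⁻¹ • c, hK (inv_nonneg.2 hgc.le) hc, ?_⟩, ?_, fun x hx => hx.1,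
    zero_notMem_closure_levelSet K g,
    fun x hx hx0 => exists_unique_smul_levelSet hK hx (hg x hx hx0)⟩
  · simp [map_smul, inv_mul_cancel₀ hgc.ne']
  · exact hconv.inter ((convex_singleton (1 : ℝ)).linear_preimage (g : X →ₗ[ℝ] ℝ))

end Base

section Ssub

variable {f : X →L[ℝ] ℝ} {α : ℝ}

theorem isClosed_Ssub (f : X →L[ℝ] ℝ) (α : ℝ) : IsClosed (Ssub f α) :=
  isClosed_Iic.preimage (f.continuous.add (continuous_const.mul continuous_norm))

theorem isCone_Ssub (f : X →L[ℝ] ℝ) (α : ℝ) : IsCone (Ssub f α) := by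
  intro l hl x hx
  have hscale : f (l • x) + α * ‖l • x‖ = l * (f x + α * ‖x‖) := by
    rw [map_smul, norm_smul, Real.norm_of_nonneg hl, smul_eq_mul]
    ring
  show f (l • x) + α * ‖l • x‖ ≤ 0
  exact hscale ▸ mul_nonpos_of_nonneg_of_nonpos hl hx

theorem zero_mem_Ssub (f : X →L[ℝ] ℝ) (α : ℝ) : (0 : X) ∈ Ssub f α := by
  simp [Ssub]

theorem add_mem_Ssub (hα : 0 ≤ α) {a b : X} (ha : a ∈ Ssub f α) (hb : b ∈ Ssub f α) :
    a + b ∈ Ssub f α := by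
  have := mul_le_mul_of_nonneg_left (norm_add_le a b) hα
  simp only [Ssub, mem_ofPred_eq, map_add] at ha hb ⊢
  linarith

theorem neg_subset_Ssub {C : Set X} (hC : ∀ x ∈ C, α * ‖x‖ ≤ f x) : -C ⊆ Ssub f α := by
  intro x hx
  have := hC (-x) hx
  rw [map_neg, norm_neg] at this
  simp only [Ssub, mem_ofPred_eq]
  linarith

theorem neg_apply_pos_of_mem_Ssub (hα : 0 < α) {x : X} (hx : x ∈ Ssub f α) (hx0 : x ≠ 0) :
    0 < (-f) x := by
  have := mul_pos hα (norm_pos_iff.2 hx0)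
  simp only [Ssub, mem_ofPred_eq] at hx
  simp only [neg_apply]
  linarith

theorem levelSet_Ssub_subset_closedBall (hα : 0 < α) :
    {x ∈ Ssub f α | (-f) x = 1} ⊆ closedBall 0 α⁻¹ := by
  rintro x ⟨hx, hfx⟩
  simp only [Ssub, mem_ofPred_eq, neg_apply] at hx hfx
  rw [mem_closedBall, dist_zero_right, ← one_div, le_div_iff₀ hα]
  linarith

theorem hasBoundedBase_Ssub (hα : 0 < α) {c : X} (hc : c ∈ Ssub f α) (hc0 : c ≠ 0) :
    HasBoundedBase (Ssub f α) :=
  ⟨_, isBase_levelSet (isCone_Ssub f α)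
      ((isCone_Ssub f α).convex fun _ ha _ hb => add_mem_Ssub hα.le ha hb)
      (fun _ => neg_apply_pos_of_mem_Ssub hα) hc hc0,
    isBounded_closedBall.subset (levelSet_Ssub_subset_closedBall hα)⟩

end Ssub

end HenigPaper

/-- If `C` is a nontrivial cone, `α > 0` and `(f,α) ∈ C^{a*}`, then `S(f,α)` is a
closed convex cone with a bounded base, and `-C ⊆ S(f,α)`. -/
theorem stmt3 (C : Set X) (hC : NontrivialCone C) (f : X →L[ℝ] ℝ) (α : ℝ)
    (hα : 0 < α) (hmem : MemAugDual C f α) :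
    IsClosed (Ssub f α) ∧ IsCone (Ssub f α) ∧ ConeConvex (Ssub f α) ∧
      HasBoundedBase (Ssub f α) ∧ -C ⊆ Ssub f α := by
  obtain ⟨-, -, hdual⟩ := hmem
  have hnegC : -C ⊆ Ssub f α := neg_subset_Ssub hdual
  obtain ⟨c, hcC, hc0⟩ := exists_of_ssubset hC.2.1
  have hnegc : -c ∈ Ssub f α := hnegC (by simpa using hcC)
  refine ⟨isClosed_Ssub f α, isCone_Ssub f α,
    coneConvex_of_add_mem (zero_mem_Ssub f α) fun _ ha _ hb => add_mem_Ssub hα.le ha hb,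
    hasBoundedBase_Ssub hα hnegc ?_, hnegC⟩
  simpa using hc0
end

section
/- Let X be a real normed space, f ∈ X*, and 0 < α < ‖f‖*. Then the interior of S(f,α) equals {x ∈ X : f(x) + α‖x‖ < 0}, and this set is nonempty. -/
open Set Metric Pointwise

open HenigPaper

variable {X : Type*} [NormedAddCommGroup X] [NormedSpace ℝ X]


/-- For `f` in the dual and `0 < α < ‖f‖`, the interior of `S(f,α)` equals
`{x : f x + α ‖x‖ < 0}`, and this set is nonempty. -/
theorem stmt4 (f : X →L[ℝ] ℝ) (α : ℝ) (h0 : 0 < α) (h1 : α < ‖f‖) :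
    interior (Ssub f α) = {x : X | f x + α * ‖x‖ < 0} ∧
      ({x : X | f x + α * ‖x‖ < 0}).Nonempty := by
  obtain ⟨u, hu1, hu2⟩ := f.exists_lt_apply_of_lt_opNorm h1
  obtain ⟨v, hv1, hv2⟩ : ∃ v : X, ‖v‖ < 1 ∧ α < f v := by
    rcases le_or_gt 0 (f u) with h | h
    · exact ⟨u, hu1, by rwa [Real.norm_eq_abs, abs_of_nonneg h] at hu2⟩
    · refine ⟨-u, by simpa using hu1, ?_⟩
      rw [map_neg]
      rwa [Real.norm_eq_abs, abs_of_neg h] at hu2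
  have hopen : IsOpen {x : X | f x + α * ‖x‖ < 0} :=
    isOpen_lt (by fun_prop) continuous_const
  constructor
  · apply le_antisymm
    · intro x hx
      have hxS : f x + α * ‖x‖ ≤ 0 := (interior_subset hx : x ∈ Ssub f α)
      by_contra hcon
      simp only [Set.mem_setOf_eq, not_lt] at hcon
      obtain ⟨ε, hε, hball⟩ := Metric.mem_nhds_iff.mp (mem_interior_iff_mem_nhds.mp hx)
      set t := ε / 2 with ht
      have ht0 : 0 < t := half_pos hε
      have hmem : x + t • v ∈ Ssub f α := by
        apply hball
        simp only [Metric.mem_ball, dist_self_add_left, norm_smul, Real.norm_eq_abs,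
          abs_of_pos ht0]
        calc t * ‖v‖ ≤ t * 1 := by nlinarith
        _ < ε := by linarith
      have hS : f (x + t • v) + α * ‖x + t • v‖ ≤ 0 := hmem
      have hnorm : ‖x‖ - t * ‖v‖ ≤ ‖x + t • v‖ := by
        have := norm_sub_norm_le x (-(t • v))
        simp only [norm_neg, sub_neg_eq_add] at this
        simpa [norm_smul, abs_of_pos ht0] using this
      have hfv : f (x + t • v) = f x + t * f v := by simp [map_add, map_smul]
      have hv0 : 0 ≤ ‖v‖ := norm_nonneg v
      have h2 : α * (‖x‖ - t * ‖v‖) ≤ α * ‖x + t • v‖ :=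
        mul_le_mul_of_nonneg_left hnorm h0.le
      have h3 : α * ‖v‖ ≤ α := by nlinarith
      nlinarith [mul_lt_mul_of_pos_left hv2 ht0, mul_le_mul_of_nonneg_left h3 ht0.le]
    · rw [← hopen.interior_eq]
      apply interior_mono
      intro x hx
      have hlt : f x + α * ‖x‖ < 0 := hx
      exact hlt.le
  · refine ⟨-v, ?_⟩
    simp only [Set.mem_setOf_eq, map_neg, norm_neg]
    nlinarith [norm_nonneg v]
end

section
/- Let X be a real normed space and C ⊆ X a nontrivial convex cone. Then C has a bounded base if and only if C^{a#}_+ is nonempty. -/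
open Set Metric Pointwise

open HenigPaper

variable {X : Type*} [NormedAddCommGroup X] [NormedSpace ℝ X]


/-- A nontrivial convex cone `C` has a bounded base iff `C^{a#}_+` is nonempty. -/
theorem stmt5 (C : Set X) (hC : NontrivialCone C) (hconv : ConeConvex C) :
    HasBoundedBase C ↔ ∃ (f : X →L[ℝ] ℝ) (α : ℝ), MemAugDualSharpPlus C f α := by
  obtain ⟨hcone, hne, -⟩ := hC
  have hCconvex : Convex ℝ C := by
    intro x hx y hy a b ha hb hab
    have := Set.add_mem_add (hcone ha hx) (hcone hb hy)
    rwa [hconv] at this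
  obtain ⟨x0, hx0C, hx0ne⟩ : ∃ x ∈ C, x ≠ 0 := by
    obtain ⟨x, hxC, hx⟩ := Set.exists_of_ssubset hne
    exact ⟨x, hxC, by simpa using hx⟩
  constructor
  · rintro ⟨B, ⟨hBne, hBconv, hBsub, hB0, hBrep⟩, hBbd⟩
    obtain ⟨M, hMpos, hM⟩ := hBbd.exists_pos_norm_le
    obtain ⟨f, u, hfu, hub⟩ :=
      geometric_hahn_banach_point_closed (hBconv.closure) isClosed_closure hB0
    have hu : 0 < u := by simpa using hfu
    set α : ℝ := u / (2 * M) with hαdef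
    have hαpos : 0 < α := by positivity
    have key : ∀ x ∈ C, x ≠ 0 → α * ‖x‖ < f x := by
      intro x hx hxne
      obtain ⟨⟨l, b⟩, ⟨hl, hbB, hxe⟩, -⟩ := hBrep x hx hxne
      have hfb : u < f b := hub b (subset_closure hbB)
      have hbM : ‖b‖ ≤ M := hM b hbB
      have hfx : f x = l * f b := by rw [hxe]; simp
      have hnx : ‖x‖ = l * ‖b‖ := by
        rw [hxe, norm_smul, Real.norm_eq_abs, abs_of_pos hl]
      rw [hfx, hnx, hαdef]
      have hb0 : 0 ≤ ‖b‖ := norm_nonneg b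
      rw [div_mul_eq_mul_div, div_lt_iff₀ (by positivity)]
      nlinarith [mul_lt_mul_of_pos_left hfb (mul_pos hl hMpos),
        mul_le_mul_of_nonneg_left hbM (mul_pos hl hu).le]
    refine ⟨f, α, fun x hx hxne => ?_, hαpos, key⟩
    have : 0 < ‖x‖ := norm_pos_iff.mpr hxne
    exact lt_of_le_of_lt (by positivity) (key x hx hxne)
  · rintro ⟨f, α, hfpos, hα, hstrict⟩
    set B : Set X := {x ∈ C | f x = 1} with hBdef
    have hBC : ∀ x ∈ C, x ≠ 0 → (f x)⁻¹ • x ∈ B := by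
      intro x hx hxne
      have hfx : 0 < f x := hfpos x hx hxne
      exact ⟨hcone (inv_nonneg.mpr hfx.le) hx, by
        simp [inv_mul_cancel₀ hfx.ne']⟩
    refine ⟨B, ⟨⟨_, hBC x0 hx0C hx0ne⟩, ?_, fun b hb => hb.1, ?_, ?_⟩, ?_⟩
    · -- convexity
      intro x hx y hy a b ha hb hab
      exact ⟨hCconvex hx.1 hy.1 ha hb hab, by
        simp [hx.2, hy.2, hab]⟩
    · -- 0 ∉ closure B
      intro h0
      have hsub : closure B ⊆ {x : X | f x = 1} := by
        apply closure_minimal (fun x hx => hx.2)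
        exact isClosed_eq f.continuous continuous_const
      have := hsub h0
      simp at this
    · -- unique representation
      intro x hx hxne
      have hfx : 0 < f x := hfpos x hx hxne
      refine ⟨(f x, (f x)⁻¹ • x), ⟨hfx, hBC x hx hxne, (smul_inv_smul₀ hfx.ne' x).symm⟩, ?_⟩
      rintro ⟨l, b⟩ ⟨hl, hbB, hxe⟩
      have hfxl : f x = l := by rw [hxe]; simp [hbB.2]
      have : b = (f x)⁻¹ • x := by
        rw [hfxl, hxe, inv_smul_smul₀ hl.ne']
      exact Prod.ext hfxl.symm this
    · -- boundedness
      rw [isBounded_iff_forall_norm_le]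
      refine ⟨1 / α, fun b hb => ?_⟩
      have hbne : b ≠ 0 := by
        rintro rfl
        have : (0:ℝ) = 1 := by simpa using hb.2
        norm_num at this
      have := hstrict b hb.1 hbne
      rw [hb.2] at this
      rw [le_div_iff₀ hα]
      nlinarith [norm_nonneg b]
end

section
/- Let X be a real normed space and C ⊆ X a nontrivial cone. Then for every 0 < ε < 1 the ε-conic neighbourhood C_ε is a closed subset of X. -/
open Set Metric Pointwise

open HenigPaper

variable {X : Type*} [NormedAddCommGroup X] [NormedSpace ℝ X]


open Filter Topology

set_option maxHeartbeats 1000000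

/-- For a nontrivial cone `C` and `0 < ε < 1`, the `ε`-conic neighbourhood `C_ε`
is closed. -/
theorem stmt6 (C : Set X) (hC : NontrivialCone C) (ε : ℝ) (h0 : 0 < ε) (h1 : ε < 1) :
    IsClosed (epsCone C ε) := by
  obtain ⟨hcone, hne, -⟩ := hC
  obtain ⟨x0, hx0C, hx0ne⟩ : ∃ x ∈ C, x ≠ 0 := by
    obtain ⟨x, hxC, hx⟩ := Set.exists_of_ssubset hne
    exact ⟨x, hxC, by simpa using hx⟩
  set T := C ∩ sphere (0 : X) 1 with hTdef
  have hT0 : (‖x0‖⁻¹ • x0) ∈ T := by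
    refine ⟨hcone (by positivity) hx0C, ?_⟩
    simp [mem_sphere_iff_norm, norm_smul, abs_of_nonneg, inv_mul_cancel₀,
      norm_ne_zero_iff.mpr hx0ne]
  have hTne : T.Nonempty := ⟨_, hT0⟩
  set S := {x : X | infDist x T ≤ ε} with hSdef
  have hScl : IsClosed S := isClosed_le (continuous_infDist_pt T) continuous_const
  have hSnorm : ∀ a ∈ S, 1 - ε ≤ ‖a‖ ∧ ‖a‖ ≤ 1 + ε := by
    intro a ha
    have key : |‖a‖ - 1| ≤ ε := by
      by_contra hcon
      push_neg at hcon
      have h2 : infDist a T < |‖a‖ - 1| := lt_of_le_of_lt ha hcon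
      obtain ⟨c, hcT, hdc⟩ := (infDist_lt_iff hTne).mp h2
      have hc1 : ‖c‖ = 1 := mem_sphere_zero_iff_norm.mp hcT.2
      have : |‖a‖ - 1| ≤ dist a c := by
        rw [dist_eq_norm, ← hc1]
        exact abs_norm_sub_norm_le a c
      linarith
    rw [abs_le] at key
    constructor <;> linarith [key.1, key.2]
  have hcg : epsCone C ε = coneGen S := rfl
  rw [hcg]
  have hmemS : (‖x0‖⁻¹ • x0) ∈ S := by
    simp only [hSdef, Set.mem_setOf_eq, infDist_zero_of_mem hT0]
    exact le_of_lt h0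
  apply IsSeqClosed.isClosed
  intro y p hy hlim
  by_cases hp : p = 0
  · exact ⟨0, le_refl 0, _, hmemS, by simp [hp]⟩
  choose l hl a ha hya using hy
  have hpnorm : 0 < ‖p‖ := norm_pos_iff.mpr hp
  have hnormlim : Tendsto (fun n => ‖y n‖) atTop (𝓝 ‖p‖) := hlim.norm
  have hev : ∀ᶠ n in atTop, ‖y n‖ ∈ Set.Icc (‖p‖ / 2) (‖p‖ + 1) := by
    apply hnormlim
    apply Icc_mem_nhds <;> linarith
  obtain ⟨N, hN⟩ := eventually_atTop.mp hev
  set m : ℝ := (‖p‖ / 2) / (1 + ε) with hm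
  set M : ℝ := (‖p‖ + 1) / (1 - ε) with hM
  have hmpos : 0 < m := by positivity
  have hbd : ∀ n, l (n + N) ∈ Set.Icc m M := by
    intro n
    have hn := hN (n + N) (Nat.le_add_left N n)
    have hanorm := hSnorm _ (ha (n + N))
    have hyn : ‖y (n + N)‖ = l (n + N) * ‖a (n + N)‖ := by
      rw [hya (n + N), norm_smul, Real.norm_eq_abs, abs_of_nonneg (hl (n + N))]
    constructor
    · rw [hm, div_le_iff₀ (by linarith)]
      calc ‖p‖ / 2 ≤ ‖y (n + N)‖ := hn.1
        _ = l (n + N) * ‖a (n + N)‖ := hyn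
        _ ≤ l (n + N) * (1 + ε) :=
          mul_le_mul_of_nonneg_left hanorm.2 (hl (n + N))
    · rw [hM, le_div_iff₀ (by linarith)]
      calc l (n + N) * (1 - ε) ≤ l (n + N) * ‖a (n + N)‖ :=
          mul_le_mul_of_nonneg_left hanorm.1 (hl (n + N))
        _ = ‖y (n + N)‖ := hyn.symm
        _ ≤ ‖p‖ + 1 := hn.2
  obtain ⟨l₀, hl₀mem, φ, hφ, hφlim⟩ :=
    tendsto_subseq_of_bounded (isBounded_Icc m M) (x := fun n => l (n + N)) hbd
  rw [closure_Icc] at hl₀mem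
  have hl₀pos : 0 < l₀ := lt_of_lt_of_le hmpos hl₀mem.1
  have hidx : Tendsto (fun n => φ n + N) atTop atTop :=
    tendsto_atTop_mono (fun n => le_trans hφ.le_apply (Nat.le_add_right _ _)) tendsto_id
  have hylim : Tendsto (fun n => y (φ n + N)) atTop (𝓝 p) := hlim.comp hidx
  have hlne : ∀ n, l (φ n + N) ≠ 0 := fun n =>
    ne_of_gt (lt_of_lt_of_le hmpos (hbd (φ n)).1)
  have halim : Tendsto (fun n => a (φ n + N)) atTop (𝓝 (l₀⁻¹ • p)) := by
    have heq : ∀ n, a (φ n + N) = (l (φ n + N))⁻¹ • y (φ n + N) := by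
      intro n
      rw [hya (φ n + N), smul_smul, inv_mul_cancel₀ (hlne n), one_smul]
    simp_rw [heq]
    exact ((hφlim.inv₀ (ne_of_gt hl₀pos)).smul hylim :)
  have hmemS' : l₀⁻¹ • p ∈ S := hScl.isSeqClosed (fun n => ha (φ n + N)) halim
  exact ⟨l₀, le_of_lt hl₀pos, _, hmemS', by rw [smul_smul, mul_inv_cancel₀ (ne_of_gt hl₀pos), one_smul]⟩
end

section
/- Let X be a real normed space and C ⊆ X a nontrivial convex cone with a bounded base B. Then there exists 0 < ε_B < 1 such that for every 0 < ε < ε_B the ε-conic neighbourhood C_ε is pointed and the Henig dilating cone C_{(B,ε)} is closed and convex. -/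
open Set Metric Pointwise

open HenigPaper

variable {X : Type*} [NormedAddCommGroup X] [NormedSpace ℝ X]


lemma coneGen_convex {A : Set X} (hA : Convex ℝ A) : Convex ℝ (coneGen A) := by
  rintro x ⟨l, hl, a, ha, rfl⟩ y ⟨m, hm, b, hb, rfl⟩ p q hp hq hpq
  have hpl := mul_nonneg hp hl
  have hqm := mul_nonneg hq hm
  by_cases h : p * l + q * m = 0
  · have h1 : p * l = 0 := by linarith
    have h2 : q * m = 0 := by linarith
    refine ⟨0, le_refl 0, a, ha, ?_⟩
    rw [smul_smul, smul_smul, h1, h2]; simp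
  · have hS : 0 < p * l + q * m := lt_of_le_of_ne (by positivity) (Ne.symm h)
    refine ⟨p * l + q * m, hS.le,
      (p * l / (p * l + q * m)) • a + (q * m / (p * l + q * m)) • b,
      hA ha hb (by positivity) (by positivity) (by field_simp), ?_⟩
    have e1 : (p * l + q * m) * (p * l / (p * l + q * m)) = p * l := by field_simp
    have e2 : (p * l + q * m) * (q * m / (p * l + q * m)) = q * m := by field_simp
    rw [smul_add, smul_smul, smul_smul, smul_smul, smul_smul, e1, e2]

lemma convex_infDist_le {B : Set X} (hB : Convex ℝ B) (hne : B.Nonempty) (ε : ℝ) :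
    Convex ℝ {x : X | infDist x B ≤ ε} := by
  intro x hx y hy p q hp hq hpq
  simp only [mem_setOf_eq] at hx hy ⊢
  apply le_of_forall_pos_le_add
  intro δ hδ
  obtain ⟨b1, hb1, hd1⟩ := (infDist_lt_iff hne).1
    (show infDist x B < ε + δ from lt_of_le_of_lt hx (lt_add_of_pos_right ε hδ))
  obtain ⟨b2, hb2, hd2⟩ := (infDist_lt_iff hne).1
    (show infDist y B < ε + δ from lt_of_le_of_lt hy (lt_add_of_pos_right ε hδ))
  have hbz : p • b1 + q • b2 ∈ B := hB hb1 hb2 hp hq hpq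
  calc infDist (p • x + q • y) B ≤ dist (p • x + q • y) (p • b1 + q • b2) :=
        infDist_le_dist_of_mem hbz
    _ ≤ p * dist x b1 + q * dist y b2 := by
        rw [dist_eq_norm, dist_eq_norm, dist_eq_norm]
        have : p • x + q • y - (p • b1 + q • b2) = p • (x - b1) + q • (y - b2) := by
          rw [smul_sub, smul_sub]; abel
        rw [this]
        calc ‖p • (x - b1) + q • (y - b2)‖ ≤ ‖p • (x - b1)‖ + ‖q • (y - b2)‖ :=
              norm_add_le _ _
          _ = p * ‖x - b1‖ + q * ‖y - b2‖ := by
              rw [norm_smul, norm_smul, Real.norm_of_nonneg hp, Real.norm_of_nonneg hq]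
    _ ≤ p * (ε + δ) + q * (ε + δ) := by
        exact add_le_add (mul_le_mul_of_nonneg_left hd1.le hp)
          (mul_le_mul_of_nonneg_left hd2.le hq)
    _ = ε + δ := by rw [← add_mul, hpq, one_mul]

lemma coneGen_closed {A : Set X} (hcl : IsClosed A) (hne : A.Nonempty)
    {R η : ℝ} (hη : 0 < η) (hub : ∀ x ∈ A, ‖x‖ ≤ R) (hlb : ∀ x ∈ A, η ≤ ‖x‖) :
    IsClosed (coneGen A) := by
  refine isClosed_of_closure_subset ?_
  intro y hy
  obtain ⟨u, hu, huy⟩ := mem_closure_iff_seq_limit.1 hy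
  choose l hl a ha hya using hu
  have hnorm : ∀ n, ‖u n‖ = l n * ‖a n‖ := fun n => by
    rw [hya n, norm_smul, Real.norm_of_nonneg (hl n)]
  obtain ⟨K, hK⟩ := (huy.norm.bddAbove_range : BddAbove (Set.range fun n => ‖u n‖))
  have hKb : ∀ n, ‖u n‖ ≤ K := fun n => hK ⟨n, rfl⟩
  have hlbd : ∀ n, l n ≤ K / η := by
    intro n
    rw [le_div_iff₀ hη]
    calc l n * η ≤ l n * ‖a n‖ := mul_le_mul_of_nonneg_left (hlb _ (ha n)) (hl n)
      _ = ‖u n‖ := (hnorm n).symm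
      _ ≤ K := hKb n
  obtain ⟨c, hc, φ, hφ, hlc⟩ := tendsto_subseq_of_bounded (isBounded_Icc 0 (K / η))
    (fun n => (⟨hl n, hlbd n⟩ : l n ∈ Icc 0 (K / η)))
  rw [closure_Icc] at hc
  rcases eq_or_lt_of_le hc.1 with hc0 | hc0
  · -- c = 0, so y = 0
    have hR : 0 ≤ R := le_trans (norm_nonneg _) (hub _ (hne.choose_spec))
    have htend : Filter.Tendsto (fun n => ‖u (φ n)‖) Filter.atTop (nhds 0) := by
      have hb : ∀ n, ‖u (φ n)‖ ≤ l (φ n) * R := by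
        intro n
        rw [hnorm]
        exact mul_le_mul_of_nonneg_left (hub _ (ha _)) (hl _)
      have : Filter.Tendsto (fun n => l (φ n) * R) Filter.atTop (nhds (c * R)) :=
        hlc.mul_const R
      rw [← hc0, zero_mul] at this
      exact squeeze_zero (fun n => norm_nonneg _) hb this
    have h0 : Filter.Tendsto (fun n => u (φ n)) Filter.atTop (nhds 0) :=
      tendsto_zero_iff_norm_tendsto_zero.2 htend
    have hy0 : y = 0 := tendsto_nhds_unique (huy.comp hφ.tendsto_atTop) h0
    exact ⟨0, le_refl 0, hne.choose, hne.choose_spec, by rw [hy0, zero_smul]⟩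
  · -- c > 0
    have hev' : ∀ᶠ n in Filter.atTop, c / 2 < l (φ n) :=
      hlc.eventually (eventually_gt_nhds (show c / 2 < c by linarith))
    have hev : ∀ᶠ n in Filter.atTop, (l (φ n))⁻¹ • u (φ n) = a (φ n) := by
      filter_upwards [hev'] with n hn
      have hlpos : 0 < l (φ n) := lt_trans (by linarith) hn
      rw [hya (φ n), inv_smul_smul₀ hlpos.ne']
    have htend2 : Filter.Tendsto (fun n => (l (φ n))⁻¹ • u (φ n)) Filter.atTop
        (nhds (c⁻¹ • y)) :=
      (hlc.inv₀ hc0.ne').smul (huy.comp hφ.tendsto_atTop)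
    have htend3 : Filter.Tendsto (fun n => a (φ n)) Filter.atTop (nhds (c⁻¹ • y)) :=
      htend2.congr' hev
    have hmem : c⁻¹ • y ∈ A := hcl.mem_of_tendsto htend3
      (Filter.Eventually.of_forall fun n => ha (φ n))
    exact ⟨c, hc0.le, c⁻¹ • y, hmem, (smul_inv_smul₀ hc0.ne' y).symm⟩

/-- For a nontrivial convex cone `C` with a bounded base `B`, there is
`0 < ε_B < 1` such that for all `0 < ε < ε_B`, `C_ε` is pointed and `C_{(B,ε)}` is closed
and convex. -/
theorem stmt7 (C B : Set X) (hC : NontrivialCone C) (hconv : ConeConvex C)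
    (hB : IsBase C B) (hBb : Bornology.IsBounded B) :
    ∃ εB : ℝ, 0 < εB ∧ εB < 1 ∧ ∀ ε : ℝ, 0 < ε → ε < εB →
      PointedCone' (epsCone C ε) ∧ IsClosed (henigCone B ε) ∧ Convex ℝ (henigCone B ε) := by
  obtain ⟨hBne, hBconv, hBsubC, hB0, hBuniq⟩ := hB
  obtain ⟨M0, hM0⟩ := hBb.exists_norm_le
  set M : ℝ := max M0 1 with hM
  have hM1 : (1 : ℝ) ≤ M := le_max_right _ _
  have hMpos : 0 < M := lt_of_lt_of_le one_pos hM1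
  have hMB : ∀ b ∈ B, ‖b‖ ≤ M := fun b hb => le_trans (hM0 b hb) (le_max_left _ _)
  -- separate 0 from closure B
  obtain ⟨f, r, hfr, hfB⟩ := geometric_hahn_banach_point_closed hBconv.closure
    isClosed_closure hB0
  rw [map_zero] at hfr
  -- the lower bound α on f over C ∩ sphere 0 1
  set α : ℝ := r / M with hα
  have hαpos : 0 < α := div_pos hfr hMpos
  have hfK : ∀ c ∈ C ∩ sphere (0 : X) 1, α ≤ f c := by
    rintro c ⟨hcC, hcS⟩
    have hcn : ‖c‖ = 1 := by simpa using hcS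
    have hcne : c ≠ 0 := by intro h; rw [h, norm_zero] at hcn; norm_num at hcn
    obtain ⟨⟨lam, b⟩, ⟨hlam, hb, hcb⟩, -⟩ := hBuniq c hcC hcne
    have hbn : ‖c‖ = lam * ‖b‖ := by
      rw [hcb, norm_smul, Real.norm_of_nonneg hlam.le]
    rw [hcn] at hbn
    have hbM : ‖b‖ ≤ M := hMB b hb
    have hlamM : 1 ≤ lam * M := by
      calc (1 : ℝ) = lam * ‖b‖ := hbn
        _ ≤ lam * M := mul_le_mul_of_nonneg_left hbM hlam.le
    have hfb : r < f b := hfB b (subset_closure hb)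
    have hfc : f c = lam * f b := by rw [hcb, map_smul]; rfl
    rw [hfc, hα, div_le_iff₀ hMpos]
    calc r = 1 * r := (one_mul r).symm
      _ ≤ (lam * M) * r := mul_le_mul_of_nonneg_right hlamM hfr.le
      _ = (lam * r) * M := by ring
      _ ≤ (lam * f b) * M := by
          have : lam * r ≤ lam * f b := mul_le_mul_of_nonneg_left hfb.le hlam.le
          exact mul_le_mul_of_nonneg_right this hMpos.le
  -- δ: distance from 0 to B
  set d0 : ℝ := infDist 0 B with hd0
  have hd0pos : 0 < d0 := by
    rcases lt_or_eq_of_le (infDist_nonneg : 0 ≤ infDist (0 : X) B) with h | h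
    · exact h
    · exact absurd ((mem_closure_iff_infDist_zero hBne).2 h.symm) hB0
  -- choose εB
  set εB : ℝ := min (min (1 / 2) (α / (‖f‖ + 1))) (d0 / 2) with hεB
  have hf1 : (0 : ℝ) < ‖f‖ + 1 := by positivity
  have hεBpos : 0 < εB := by
    apply lt_min (lt_min (by norm_num) (div_pos hαpos hf1)) (by linarith)
  have hεB1 : εB < 1 := lt_of_le_of_lt (le_trans (min_le_left _ _) (min_le_left _ _))
    (by norm_num)
  have hfεB : ‖f‖ * εB < α := by
    have h1 : εB ≤ α / (‖f‖ + 1) := le_trans (min_le_left _ _) (min_le_right _ _)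
    have h2 : εB * (‖f‖ + 1) ≤ α := (le_div_iff₀ hf1).1 h1
    nlinarith [norm_nonneg f, hεBpos]
  have hεBd0 : εB ≤ d0 / 2 := min_le_right _ _
  -- nonemptiness of C ∩ sphere
  have hKne : (C ∩ sphere (0 : X) 1).Nonempty := by
    obtain ⟨x, hxC, hx0⟩ : ∃ x ∈ C, x ≠ 0 := by
      rcases Set.exists_of_ssubset hC.2.1 with ⟨x, hxC, hx⟩
      exact ⟨x, hxC, fun h => hx (by simp [h])⟩
    have hxn : 0 < ‖x‖ := norm_pos_iff.2 hx0
    refine ⟨‖x‖⁻¹ • x, hC.1 (inv_nonneg.2 hxn.le) hxC, ?_⟩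
    simp [norm_smul, Real.norm_of_nonneg (inv_nonneg.2 hxn.le), inv_mul_cancel₀ hxn.ne']
  refine ⟨εB, hεBpos, hεB1, fun ε hε hεlt => ?_⟩
  have hεd0 : ε < d0 / 2 := lt_of_lt_of_le hεlt hεBd0
  refine ⟨?_, ?_, ?_⟩
  · -- pointedness of epsCone C ε
    ext z
    simp only [Set.mem_inter_iff, Set.mem_neg, Set.mem_singleton_iff]
    constructor
    · rintro ⟨hzn, hz⟩
      by_contra hz0
      obtain ⟨l, hl, s, hs, hzs⟩ := hz
      obtain ⟨m, hm, t, ht, hzt⟩ := hzn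
      have hlpos : 0 < l := by
        rcases lt_or_eq_of_le hl with h | h
        · exact h
        · exact absurd (by rw [hzs, ← h, zero_smul]) hz0
      have hmpos : 0 < m := by
        rcases lt_or_eq_of_le hm with h | h
        · exact h
        · exact absurd (by rw [← neg_neg z, hzt, ← h, zero_smul, neg_zero]) hz0
      obtain ⟨c, hcK, hdc⟩ := (infDist_lt_iff hKne).1
        (lt_of_le_of_lt hs (lt_of_lt_of_le hεlt (le_refl εB)) : infDist s _ < εB)
      obtain ⟨c', hcK', hdc'⟩ := (infDist_lt_iff hKne).1
        (lt_of_le_of_lt ht (lt_of_lt_of_le hεlt (le_refl εB)) : infDist t _ < εB)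
      have heq : l • s + m • t = 0 := by
        rw [← hzs, ← hzt]; abel
      have hvec : l • c + m • c' = l • (c - s) + m • (c' - t) := by
        have : l • (c - s) + m • (c' - t) = l • c + m • c' - (l • s + m • t) := by
          rw [smul_sub, smul_sub]; abel
        rw [this, heq, sub_zero]
      have hlow : (l + m) * α ≤ f (l • c + m • c') := by
        have : f (l • c + m • c') = l * f c + m * f c' := by
          rw [map_add, map_smul, map_smul]; rfl
        rw [this]
        have h1 := mul_le_mul_of_nonneg_left (hfK c hcK) hl
        have h2 := mul_le_mul_of_nonneg_left (hfK c' hcK') hm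
        nlinarith
      have hup : f (l • (c - s) + m • (c' - t)) < (l + m) * α := by
        have hnv : ‖l • (c - s) + m • (c' - t)‖ ≤ (l + m) * εB := by
          calc ‖l • (c - s) + m • (c' - t)‖
              ≤ ‖l • (c - s)‖ + ‖m • (c' - t)‖ := norm_add_le _ _
            _ = l * ‖c - s‖ + m * ‖c' - t‖ := by
                rw [norm_smul, norm_smul, Real.norm_of_nonneg hl, Real.norm_of_nonneg hm]
            _ ≤ l * εB + m * εB := by
                have e1 : ‖c - s‖ ≤ εB := by
                  rw [norm_sub_rev]; exact le_of_lt (by rwa [dist_eq_norm] at hdc)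
                have e2 : ‖c' - t‖ ≤ εB := by
                  rw [norm_sub_rev]; exact le_of_lt (by rwa [dist_eq_norm] at hdc')
                exact add_le_add (mul_le_mul_of_nonneg_left e1 hl)
                  (mul_le_mul_of_nonneg_left e2 hm)
            _ = (l + m) * εB := by ring
        calc f (l • (c - s) + m • (c' - t))
            ≤ ‖f‖ * ‖l • (c - s) + m • (c' - t)‖ := by
              have := f.le_opNorm (l • (c - s) + m • (c' - t))
              exact le_trans (le_abs_self _) this
          _ ≤ ‖f‖ * ((l + m) * εB) :=
              mul_le_mul_of_nonneg_left hnv (norm_nonneg f)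
          _ = (‖f‖ * εB) * (l + m) := by ring
          _ < α * (l + m) := by
              exact mul_lt_mul_of_pos_right hfεB (by linarith)
          _ = (l + m) * α := by ring
      rw [hvec] at hlow
      linarith
    · rintro rfl
      obtain ⟨c0, hc0⟩ := hKne
      have h0S : infDist c0 (C ∩ sphere (0 : X) 1) ≤ ε := by
        rw [infDist_zero_of_mem hc0]; exact hε.le
      have h0 : (0 : X) ∈ epsCone C ε := ⟨0, le_refl 0, c0, h0S, (zero_smul ℝ c0).symm⟩
      exact ⟨by rwa [neg_zero], h0⟩
  · -- closedness of henigCone B ε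
    have hAclosed : IsClosed {x : X | infDist x B ≤ ε} :=
      isClosed_le (continuous_infDist_pt B) continuous_const
    have hAne : ({x : X | infDist x B ≤ ε}).Nonempty := by
      obtain ⟨b, hb⟩ := hBne
      exact ⟨b, by simp [infDist_zero_of_mem hb]; linarith⟩
    have hub : ∀ x ∈ {x : X | infDist x B ≤ ε}, ‖x‖ ≤ M + ε + 1 := by
      intro x hx
      obtain ⟨b, hb, hd⟩ := (infDist_lt_iff hBne).1
        (lt_of_le_of_lt hx (lt_add_one ε) : infDist x B < ε + 1)
      have : ‖x‖ ≤ ‖x - b‖ + ‖b‖ := by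
        calc ‖x‖ = ‖(x - b) + b‖ := by rw [sub_add_cancel]
          _ ≤ ‖x - b‖ + ‖b‖ := norm_add_le _ _
      rw [dist_eq_norm] at hd
      have := hMB b hb
      linarith
    have hlb : ∀ x ∈ {x : X | infDist x B ≤ ε}, d0 / 2 ≤ ‖x‖ := by
      intro x hx
      have h1 : infDist (0 : X) B ≤ infDist x B + dist 0 x :=
        infDist_le_infDist_add_dist
      rw [dist_comm, dist_zero_right] at h1
      have : infDist x B ≤ ε := hx
      have h2 : d0 ≤ ε + ‖x‖ := by rw [hd0]; linarith
      linarith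
    exact coneGen_closed hAclosed hAne (by linarith : (0:ℝ) < d0 / 2) hub hlb
  · -- convexity of henigCone B ε
    exact coneGen_convex (convex_infDist_le hBconv hBne ε)
end

section
/- Let X be a real normed space, C ⊆ X a nontrivial convex cone having a bounded base, and 0 < ε < 1. Then there exist a bounded base B of C and 0 < ε' < ε such that δ_B > ε, C_{(B,ε)} ⊆ C_ε, and C_α \ {0} ⊆ int(C_{(B,ε)}) for every 0 < α < ε'. -/
open Set Metric Pointwise

open HenigPaper

variable {X : Type*} [NormedAddCommGroup X] [NormedSpace ℝ X]

/-!
Rescale a bounded base so that all its elements have norm at least `2`. If `y` is within `ε` of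
the base, close to some `b`, then `y / ‖b‖` is within `ε` of the unit vector `b / ‖b‖ ∈ C`, which
gives `C_{(B,ε)} ⊆ C_ε`. Conversely, if `B` lies in the ball of radius `M`, a unit vector `c = μ b`
of `C` satisfies `μ⁻¹ = ‖b‖ ≤ M`, so dividing by `μ` moves a point `α`-close to `c` to a point
`Mα`-close to `b`; for `Mα < ε` this point is interior to `{x | d(x, B) ≤ ε}`.
-/

namespace HenigPaper

variable {C B : Set X}

theorem IsBase.smul (hC : IsCone C) (hB : IsBase C B) {t : ℝ} (ht : 0 < t) :
    IsBase C (t • B) := by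
  obtain ⟨hne, hcv, hsub, hcl, huniq⟩ := hB
  refine ⟨hne.smul_set, hcv.smul t, ?_, ?_, ?_⟩
  · rintro _ ⟨b, hb, rfl⟩
    exact hC ht.le (hsub hb)
  · rw [closure_smul₀' ht.ne', zero_mem_smul_set_iff ht.ne']
    exact hcl
  · intro x hx hx0
    obtain ⟨⟨l, b⟩, ⟨hl, hb, rfl⟩, huniq⟩ := huniq x hx hx0
    refine ⟨(l / t, t • b), ⟨div_pos hl ht, smul_mem_smul_set hb, ?_⟩, ?_⟩
    · rw [smul_smul, div_mul_cancel₀ _ ht.ne']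
    · rintro ⟨m, _⟩ ⟨hm, ⟨b', hb', rfl⟩, hxy⟩
      have hmb : (m * t, b') = (l, b) :=
        huniq (m * t, b') ⟨mul_pos hm ht, hb', by rw [hxy, smul_smul]⟩
      simp only [Prod.mk.injEq] at hmb ⊢
      rw [← hmb.1, ← hmb.2, mul_div_cancel_right₀ _ ht.ne']
      exact ⟨rfl, rfl⟩

theorem IsBase.exists_pos_le_norm (hB : IsBase C B) : ∃ r > 0, ∀ b ∈ B, r ≤ ‖b‖ :=
  ⟨infDist 0 B, (infDist_pos_iff_notMem_closure hB.1).1 hB.2.2.2.1,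
    fun _ hb => by simpa using infDist_le_dist_of_mem (x := 0) hb⟩

theorem HasBoundedBase.exists_base_le_norm (hC : IsCone C) (h : HasBoundedBase C) {R : ℝ}
    (hR : 0 < R) : ∃ B, IsBase C B ∧ Bornology.IsBounded B ∧ ∀ b ∈ B, R ≤ ‖b‖ := by
  obtain ⟨B, hB, hBbd⟩ := h
  obtain ⟨r, hr, hrB⟩ := hB.exists_pos_le_norm
  refine ⟨(R / r) • B, hB.smul hC (by positivity), hBbd.smul₀ _, ?_⟩
  rintro _ ⟨b, hb, rfl⟩
  rw [norm_smul, Real.norm_of_nonneg (by positivity), div_mul_eq_mul_div, le_div_iff₀ hr]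
  exact mul_le_mul_of_nonneg_left (hrB b hb) hR.le

theorem IsBase.inv_norm_smul_mem (hC : IsCone C) (hB : IsBase C B) {b : X} (hb : b ∈ B) :
    ‖b‖⁻¹ • b ∈ C ∩ sphere (0 : X) 1 := by
  have hb0 : b ≠ 0 := ne_of_mem_of_not_mem (subset_closure hb) hB.2.2.2.1
  refine ⟨hC (by positivity) (hB.2.2.1 hb), ?_⟩
  rw [mem_sphere_zero_iff_norm, norm_smul, norm_inv, norm_norm, inv_mul_cancel₀ (norm_ne_zero_iff.2 hb0)]

theorem henigCone_subset_epsCone (hC : IsCone C) (hB : IsBase C B) {R ε : ℝ} (hR : 1 < R)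
    (hB_norm : ∀ b ∈ B, R ≤ ‖b‖) (hε : 0 < ε) : henigCone B ε ⊆ epsCone C ε := by
  rintro _ ⟨l, hl, y, hy, rfl⟩
  obtain ⟨b, hb, hyb⟩ :=
    (infDist_lt_iff hB.1).1 ((hy : infDist y B ≤ ε).trans_lt (lt_mul_of_one_lt_left hε hR))
  have hb0 : 0 < ‖b‖ := by linarith [hB_norm b hb]
  refine ⟨l * ‖b‖, by positivity, ‖b‖⁻¹ • y, ?_, ?_⟩
  · calc infDist (‖b‖⁻¹ • y) (C ∩ sphere 0 1) ≤ dist (‖b‖⁻¹ • y) (‖b‖⁻¹ • b) :=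
          infDist_le_dist_of_mem (hB.inv_norm_smul_mem hC hb)
      _ = dist y b / ‖b‖ := by rw [dist_smul₀, norm_inv, norm_norm, inv_mul_eq_div]
      _ ≤ ε := by
          rw [div_le_iff₀ hb0]
          nlinarith [hB_norm b hb]
  · rw [smul_smul, mul_assoc, mul_inv_cancel₀ hb0.ne', mul_one]

theorem IsBase.exists_infDist_inv_smul_lt (hC : IsCone C) (hB : IsBase C B) {M ε : ℝ}
    (hM : 0 < M) (hB_norm : ∀ b ∈ B, ‖b‖ ≤ M) {z : X}
    (hz : M * infDist z (C ∩ sphere 0 1) < ε) : ∃ μ : ℝ, 0 < μ ∧ infDist (μ⁻¹ • z) B < ε := by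
  obtain ⟨b₀, hb₀⟩ := hB.1
  obtain ⟨c, ⟨hcC, hc1⟩, hzc⟩ :=
    (infDist_lt_iff ⟨_, hB.inv_norm_smul_mem hC hb₀⟩).1 ((lt_div_iff₀' hM).2 hz)
  rw [mem_sphere_zero_iff_norm] at hc1
  have hc0 : c ≠ 0 := by
    rintro rfl
    simp at hc1
  obtain ⟨⟨μ, b⟩, ⟨hμ, hb, rfl⟩, -⟩ := hB.2.2.2.2 c hcC hc0
  have hμb : μ⁻¹ = ‖b‖ := by
    rw [norm_smul, Real.norm_of_nonneg hμ.le] at hc1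
    exact inv_eq_of_mul_eq_one_right hc1
  refine ⟨μ, hμ, ?_⟩
  calc infDist (μ⁻¹ • z) B ≤ dist (μ⁻¹ • z) (μ⁻¹ • μ • b) := by
        rw [inv_smul_smul₀ hμ.ne']
        exact infDist_le_dist_of_mem hb
    _ = ‖b‖ * dist z (μ • b) := by
        rw [dist_smul₀, Real.norm_of_nonneg (inv_nonneg.2 hμ.le), hμb]
    _ ≤ M * dist z (μ • b) := mul_le_mul_of_nonneg_right (hB_norm b hb) dist_nonneg
    _ < ε := (lt_div_iff₀' hM).1 hzc

theorem smul_mem_interior_coneGen {A : Set X} {w : X} {l : ℝ} (hl : 0 < l)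
    (hw : w ∈ interior A) : l • w ∈ interior (coneGen A) :=
  interior_maximal (by rintro _ ⟨v, hv, rfl⟩; exact ⟨l, hl.le, v, interior_subset hv, rfl⟩)
    (isOpen_interior.smul₀ hl.ne') (smul_mem_smul_set hw)

theorem mem_interior_setOf_infDist_le {Y : Type*} [PseudoMetricSpace Y] {s : Set Y} {w : Y}
    {ε : ℝ} (h : infDist w s < ε) : w ∈ interior {x | infDist x s ≤ ε} :=
  interior_maximal (fun _ hx => le_of_lt hx)
    (isOpen_lt (continuous_infDist_pt s) continuous_const) h

theorem epsCone_diff_zero_subset_interior_henigCone (hC : IsCone C) (hB : IsBase C B)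
    {M α ε : ℝ} (hM : 0 < M) (hB_norm : ∀ b ∈ B, ‖b‖ ≤ M) (hα : M * α < ε) :
    epsCone C α \ {0} ⊆ interior (henigCone B ε) := by
  rintro _ ⟨⟨l, hl, z, hz, rfl⟩, hx0⟩
  have hl0 : 0 < l := hl.lt_of_ne <| by
    rintro rfl
    exact hx0 (zero_smul ℝ z)
  obtain ⟨μ, hμ, hzμ⟩ := hB.exists_infDist_inv_smul_lt hC hM hB_norm
    ((mul_le_mul_of_nonneg_left hz hM.le).trans_lt hα)
  have := smul_mem_interior_coneGen (mul_pos hl0 hμ) (mem_interior_setOf_infDist_le hzμ)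
  rwa [smul_smul, mul_assoc, mul_inv_cancel₀ hμ.ne', mul_one] at this

end HenigPaper

theorem stmt8_general (C : Set X) (hC : NontrivialCone C)
    (hbb : HasBoundedBase C) (ε : ℝ) (h0 : 0 < ε) (h1 : ε < 1) :
    ∃ B : Set X, IsBase C B ∧ Bornology.IsBounded B ∧
      ∃ ε' : ℝ, 0 < ε' ∧ ε' < ε ∧ ε < deltaB B ∧ henigCone B ε ⊆ epsCone C ε ∧
        ∀ α : ℝ, 0 < α → α < ε' →
          epsCone C α \ {(0 : X)} ⊆ interior (henigCone B ε) := by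
  obtain ⟨B, hB, hBbd, hB_two⟩ := hbb.exists_base_le_norm hC.1 two_pos
  obtain ⟨M, hM, hB_M⟩ := hBbd.exists_pos_norm_le
  refine ⟨B, hB, hBbd, ε / (M + 1), by positivity, div_lt_self h0 (by linarith), ?_,
    henigCone_subset_epsCone hC.1 hB one_lt_two hB_two h0, fun α hα hαε' => ?_⟩
  · calc ε < 2 := by linarith
      _ ≤ deltaB B := le_csInf (hB.1.image _) (forall_mem_image.2 hB_two)
  · refine epsCone_diff_zero_subset_interior_henigCone hC.1 hB hM hB_M ?_
    calc M * α < (M + 1) * α := by linarith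
      _ < ε := (lt_div_iff₀' (by positivity)).1 hαε'

/-- For a nontrivial convex cone `C` with a bounded base and `0 < ε < 1`, there
exist a bounded base `B` of `C` and `0 < ε' < ε` with `δ_B > ε`, `C_{(B,ε)} ⊆ C_ε`, and
`C_α \ {0} ⊆ int C_{(B,ε)}` for every `0 < α < ε'`. -/
theorem stmt8 (C : Set X) (hC : NontrivialCone C) (hconv : ConeConvex C)
    (hbb : HasBoundedBase C) (ε : ℝ) (h0 : 0 < ε) (h1 : ε < 1) :
    ∃ B : Set X, IsBase C B ∧ Bornology.IsBounded B ∧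
      ∃ ε' : ℝ, 0 < ε' ∧ ε' < ε ∧ ε < deltaB B ∧ henigCone B ε ⊆ epsCone C ε ∧
        ∀ α : ℝ, 0 < α → α < ε' →
          epsCone C α \ {(0 : X)} ⊆ interior (henigCone B ε) :=
  stmt8_general C hC hbb ε h0 h1
end

section
/- Let X be a real normed space, C ⊆ X a nontrivial cone, and 0 < ε < 1. Then the following are equivalent: (i) the pair (C, C_ε) has the strict separation property; (ii) there exist δ₂ > δ₁ > 0 and f ∈ X* such that for every α ∈ (δ₁, δ₂): (f,α) ∈ C^{a#}_+, −C \ {0} ⊆ int(S(f,α)) = {x ∈ X : f(x) + α‖x‖ < 0} ⊆ −C_ε, and f(x) + α‖x‖ > 0 whenever x ∈ X \ int(−C_ε) and x ≠ 0. -/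
open Set Metric Pointwise

open HenigPaper

variable {X : Type*} [NormedAddCommGroup X] [NormedSpace ℝ X]



section Stmt9Aux

lemma isCone_epsCone' (C : Set X) (ε : ℝ) : IsCone (epsCone C ε) := by
  rintro l hl x ⟨m, hm, a, ha, rfl⟩
  exact ⟨l * m, mul_nonneg hl hm, a, ha, (mul_smul l m a).symm⟩

lemma smul_set_cone_eq' {K : Set X} (hK : IsCone K) {l : ℝ} (hl : 0 < l) : l • K = K := by
  apply Set.Subset.antisymm
  · rintro _ ⟨x, hx, rfl⟩; exact hK hl.le hx
  · intro x hx
    refine ⟨l⁻¹ • x, hK (inv_nonneg.2 hl.le) hx, ?_⟩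
    show l • l⁻¹ • x = x
    rw [smul_smul, mul_inv_cancel₀ hl.ne', one_smul]

lemma smul_mem_interior_cone' {K : Set X} (hK : IsCone K) {l : ℝ} (hl : 0 < l) {x : X}
    (hx : x ∈ interior K) : l • x ∈ interior K := by
  have h : l • x ∈ l • interior K := smul_mem_smul_set hx
  rwa [← interior_smul₀ hl.ne' K, smul_set_cone_eq' hK hl] at h

lemma smul_mem_frontier_cone' {K : Set X} (hK : IsCone K) {l : ℝ} (hl : 0 < l) {x : X}
    (hx : x ∈ frontier K) : l • x ∈ frontier K := by
  constructor
  · have h : l • x ∈ l • closure K := smul_mem_smul_set hx.1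
    rwa [← closure_smul₀' hl.ne' K, smul_set_cone_eq' hK hl] at h
  · intro hin
    have h2 := smul_mem_interior_cone' hK (inv_pos.2 hl) hin
    rw [smul_smul, inv_mul_cancel₀ hl.ne', one_smul] at h2
    exact hx.2 h2

omit [NormedSpace ℝ X] in
lemma interior_neg'' (s : Set X) : interior (-s) = -(interior s) :=
  ((Homeomorph.neg X).preimage_interior s).symm

lemma exists_mem_frontier_segment' {K : Set X} {a b : X} (ha : a ∈ interior K)
    (hb : b ∉ closure K) :
    ∃ t : ℝ, 0 < t ∧ t < 1 ∧ (1 - t) • a + t • b ∈ frontier K := by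
  set h : ℝ → X := fun t => (1 - t) • a + t • b with hh
  have hcont : Continuous h := by fun_prop
  set T : Set ℝ := Set.Icc (0 : ℝ) 1 ∩ h ⁻¹' closure K with hT
  have h0T : (0 : ℝ) ∈ T := by
    refine ⟨⟨le_refl 0, zero_le_one⟩, ?_⟩
    have he : h 0 = a := by simp [hh]
    simp only [Set.mem_preimage, he]
    exact subset_closure (interior_subset ha)
  have hTclosed : IsClosed T := isClosed_Icc.inter (isClosed_closure.preimage hcont)
  have hTbdd : BddAbove T := ⟨1, fun t ht => ht.1.2⟩
  set t := sSup T with htdef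
  have htT : t ∈ T := hTclosed.csSup_mem ⟨0, h0T⟩ hTbdd
  have ht1 : t < 1 := by
    rcases lt_or_eq_of_le htT.1.2 with h' | h'
    · exact h'
    · exfalso; apply hb
      have hmem := htT.2
      rw [h'] at hmem
      simpa [hh] using hmem
  have hne : h t ∉ interior K := by
    intro hin
    have hmem : h ⁻¹' interior K ∈ nhds t := (isOpen_interior.preimage hcont).mem_nhds hin
    obtain ⟨δ, hδ, hball⟩ := Metric.mem_nhds_iff.1 hmem
    set t' := min (t + δ / 2) 1 with ht'
    have htt' : t < t' := lt_min (by linarith) ht1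
    have ht'ball : t' ∈ ball t δ := by
      rw [mem_ball, Real.dist_eq, abs_of_pos (by linarith)]
      have hle : t' ≤ t + δ / 2 := min_le_left _ _
      linarith
    have ht'T : t' ∈ T :=
      ⟨⟨le_trans htT.1.1 htt'.le, min_le_right _ _⟩,
        Set.mem_preimage.2 (subset_closure (interior_subset (hball ht'ball)))⟩
    exact absurd (le_csSup hTbdd ht'T) (not_le.2 htt')
  have ht0 : 0 < t := by
    rcases lt_or_eq_of_le htT.1.1 with h' | h'
    · exact h'
    · exfalso; apply hne
      rw [← h']
      have he : h 0 = a := by simp [hh]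
      rw [he]; exact ha
  exact ⟨t, ht0, ht1, htT.2, hne⟩

end Stmt9Aux

/-- Characterization of the SSP for the pair `(C, C_ε)`. -/
theorem stmt9 (C : Set X) (hC : NontrivialCone C) (ε : ℝ) (h0 : 0 < ε) (h1 : ε < 1) :
    SSP C (epsCone C ε) ↔
      ∃ δ₁ δ₂ : ℝ, 0 < δ₁ ∧ δ₁ < δ₂ ∧ ∃ f : X →L[ℝ] ℝ,
        ∀ α ∈ Set.Ioo δ₁ δ₂,
          MemAugDualSharpPlus C f α ∧
          (-C) \ {(0 : X)} ⊆ interior (Ssub f α) ∧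
          interior (Ssub f α) = {x : X | f x + α * ‖x‖ < 0} ∧
          interior (Ssub f α) ⊆ -(epsCone C ε) ∧
          ∀ x : X, x ∉ interior (-(epsCone C ε)) → x ≠ 0 → 0 < f x + α * ‖x‖ := by
  obtain ⟨hCcone, hCsub, -⟩ := hC
  obtain ⟨c₀, hc₀C, hc₀ne⟩ : ∃ c ∈ C, c ≠ (0 : X) := by
    rcases Set.not_subset.1 hCsub.2 with ⟨c, hc, hcn⟩
    exact ⟨c, hc, by simpa using hcn⟩
  have hnorm : ∀ x ∈ C, x ≠ (0 : X) → ‖x‖⁻¹ • x ∈ C ∩ sphere (0 : X) 1 := by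
    intro x hx hx0
    have hxn : 0 < ‖x‖ := norm_pos_iff.2 hx0
    refine ⟨hCcone (inv_nonneg.2 hxn.le) hx, ?_⟩
    rw [mem_sphere_zero_iff_norm, norm_smul, norm_inv, norm_norm, inv_mul_cancel₀ hxn.ne']
  have hKcone : IsCone (epsCone C ε) := isCone_epsCone' C ε
  have hCS_int : C ∩ sphere (0 : X) 1 ⊆ interior (epsCone C ε) := by
    intro x hx
    refine mem_interior.2 ⟨ball x ε, ?_, isOpen_ball, mem_ball_self h0⟩
    intro v hv
    refine ⟨1, zero_le_one, v, ?_, (one_smul ℝ v).symm⟩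
    exact (infDist_le_dist_of_mem hx).trans (le_of_lt hv)
  obtain ⟨x₀, hx₀⟩ : ∃ x, x ∈ C ∩ sphere (0 : X) 1 := ⟨_, hnorm c₀ hc₀C hc₀ne⟩
  have hx₀n : ‖x₀‖ = 1 := mem_sphere_zero_iff_norm.1 hx₀.2
  constructor
  · -- forward direction
    intro hSSP
    have hconvD : Convex ℝ (convexHull ℝ (C ∩ sphere (0 : X) 1) -
        convexHull ℝ ((frontier (epsCone C ε) ∩ sphere (0 : X) 1) ∪ {(0 : X)})) :=
      (convex_convexHull ℝ _).sub (convex_convexHull ℝ _)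
    obtain ⟨f, u, hu0, hsep⟩ :=
      geometric_hahn_banach_point_closed hconvD.closure isClosed_closure hSSP
    have hu : 0 < u := by simpa using hu0
    have hF2 : ∀ x ∈ C ∩ sphere (0 : X) 1,
        ∀ y ∈ (frontier (epsCone C ε) ∩ sphere (0 : X) 1) ∪ {(0 : X)},
        u < f x - f y := by
      intro x hx y hy
      have hmem : x - y ∈ convexHull ℝ (C ∩ sphere (0 : X) 1) -
          convexHull ℝ ((frontier (epsCone C ε) ∩ sphere (0 : X) 1) ∪ {(0 : X)}) :=
        Set.sub_mem_sub (subset_convexHull ℝ _ hx) (subset_convexHull ℝ _ hy)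
      have h := hsep _ (subset_closure hmem)
      simpa [map_sub] using h
    have hF1 : ∀ x ∈ C ∩ sphere (0 : X) 1, u < f x := by
      intro x hx
      have h := hF2 x hx 0 (Set.mem_union_right _ rfl)
      simpa using h
    set M : ℝ := max (sSup (f '' (frontier (epsCone C ε) ∩ sphere (0 : X) 1))) 0 with hMdef
    have hM0 : 0 ≤ M := le_max_right _ _
    have hfM : ∀ w ∈ frontier (epsCone C ε) ∩ sphere (0 : X) 1, f w ≤ M := by
      intro w hw
      refine le_trans (le_csSup ⟨‖f‖, ?_⟩ (Set.mem_image_of_mem f hw)) (le_max_left _ _)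
      rintro v ⟨w', hw', rfl⟩
      calc f w' ≤ |f w'| := le_abs_self _
        _ ≤ ‖f‖ * ‖w'‖ := f.le_opNorm w'
        _ = ‖f‖ := by rw [mem_sphere_zero_iff_norm.1 hw'.2, mul_one]
    have hCM : ∀ x ∈ C ∩ sphere (0 : X) 1, M + u ≤ f x := by
      intro x hx
      have h1 := hF1 x hx
      have h2 : sSup (f '' (frontier (epsCone C ε) ∩ sphere (0 : X) 1)) ≤ f x - u := by
        apply Real.sSup_le
        · rintro v ⟨w, hw, rfl⟩
          linarith [hF2 x hx w (Set.mem_union_left _ hw)]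
        · linarith
      have h3 : M ≤ f x - u := max_le h2 (by linarith)
      linarith
    refine ⟨M + u / 3, M + u / 2, by linarith, by linarith, f, ?_⟩
    intro α hα
    obtain ⟨hα1, hα2⟩ := hα
    have hαpos : 0 < α := by linarith
    have hαM : M < α := by linarith
    have hkey : ∀ x ∈ C, x ≠ (0 : X) → α * ‖x‖ < f x := by
      intro x hxC hx0
      have hxn := hnorm x hxC hx0
      have hx' := hCM _ hxn
      rw [map_smul, smul_eq_mul] at hx'
      have hxpos : 0 < ‖x‖ := norm_pos_iff.2 hx0
      have h4 := mul_le_mul_of_nonneg_left hx' hxpos.le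
      rw [← mul_assoc, mul_inv_cancel₀ hxpos.ne', one_mul] at h4
      nlinarith [mul_pos (show (0:ℝ) < M + u - α by linarith) hxpos]
    have hstar : ∀ y : X, ‖y‖ = 1 → y ∉ interior (epsCone C ε) → f y < α := by
      intro y hy hyint
      by_cases hyc : y ∈ closure (epsCone C ε)
      · have hyf : y ∈ frontier (epsCone C ε) ∩ sphere (0 : X) 1 :=
          ⟨⟨hyc, hyint⟩, mem_sphere_zero_iff_norm.2 hy⟩
        linarith [hfM y hyf]
      · obtain ⟨t, ht0, ht1, hzfr⟩ := exists_mem_frontier_segment' (hCS_int hx₀) hyc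
        set z : X := (1 - t) • x₀ + t • y with hzdef
        have hfx₀ : M + u ≤ f x₀ := hCM _ hx₀
        have hzle : ‖z‖ ≤ 1 := by
          calc ‖z‖ ≤ ‖(1 - t) • x₀‖ + ‖t • y‖ := norm_add_le _ _
            _ = (1 - t) * ‖x₀‖ + t * ‖y‖ := by
                rw [norm_smul, norm_smul, Real.norm_eq_abs, Real.norm_eq_abs,
                  abs_of_nonneg (by linarith), abs_of_nonneg ht0.le]
            _ = 1 := by rw [hy, hx₀n]; ring
        have hfz : f z ≤ M := by
          by_cases hz0 : z = 0
          · rw [hz0, map_zero]; exact hM0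
          · have hzpos : 0 < ‖z‖ := norm_pos_iff.2 hz0
            have hzn : ‖z‖⁻¹ • z ∈ frontier (epsCone C ε) ∩ sphere (0 : X) 1 := by
              refine ⟨smul_mem_frontier_cone' hKcone (inv_pos.2 hzpos) hzfr, ?_⟩
              rw [mem_sphere_zero_iff_norm, norm_smul, norm_inv, norm_norm,
                inv_mul_cancel₀ hzpos.ne']
            have h1 := hfM _ hzn
            rw [map_smul, smul_eq_mul] at h1
            have h2 : f z ≤ ‖z‖ * M := by
              have h3 := mul_le_mul_of_nonneg_left h1 hzpos.le
              rwa [← mul_assoc, mul_inv_cancel₀ hzpos.ne', one_mul] at h3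
            nlinarith [hzle, hM0, hzpos]
        have hfzexp : f z = (1 - t) * f x₀ + t * f y := by
          rw [hzdef, map_add, map_smul, map_smul, smul_eq_mul, smul_eq_mul]
        have hty : t * f y < t * α := by
          nlinarith [mul_nonneg (show (0:ℝ) ≤ 1 - t by linarith)
            (show (0:ℝ) ≤ f x₀ - α by linarith)]
        exact (mul_lt_mul_iff_right₀ ht0).1 hty
    have hg0 : StrictlyPos C f := fun x hx hx0 =>
      (mul_pos hαpos (norm_pos_iff.2 hx0)).trans (hkey x hx hx0)
    have hSsubEq : interior (Ssub f α) = {x : X | f x + α * ‖x‖ < 0} := by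
      apply Set.Subset.antisymm
      · intro x hx
        have hle0 : x ∈ Ssub f α := interior_subset hx
        have hle : f x + α * ‖x‖ ≤ 0 := hle0
        rcases lt_or_eq_of_le hle with h | h
        · exact h
        · exfalso
          obtain ⟨r, hr, hball⟩ := Metric.mem_nhds_iff.1 (mem_interior_iff_mem_nhds.1 hx)
          set s : ℝ := r / (2 * (‖x + x₀‖ + 1)) with hsdef
          have hs : 0 < s := by positivity
          set z : X := x + s • (x + x₀) with hzdef
          have hzball : z ∈ ball x r := by
            rw [mem_ball, dist_eq_norm]
            have he : z - x = s • (x + x₀) := by rw [hzdef]; exact add_sub_cancel_left x _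
            rw [he, norm_smul, Real.norm_eq_abs, abs_of_pos hs]
            rw [hsdef, div_mul_eq_mul_div, div_lt_iff₀ (by positivity)]
            nlinarith [norm_nonneg (x + x₀)]
          have hzS : f z + α * ‖z‖ ≤ 0 := hball hzball
          have hnz : (1 + s) * ‖x‖ - s * ‖x₀‖ ≤ ‖z‖ := by
            have he : (1 + s) • x = z - s • x₀ := by rw [hzdef]; module
            have h1 : ‖(1 + s) • x‖ ≤ ‖z‖ + ‖s • x₀‖ := by
              rw [he]; exact norm_sub_le _ _
            rw [norm_smul, norm_smul, Real.norm_eq_abs, Real.norm_eq_abs,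
              abs_of_pos (by linarith), abs_of_pos hs] at h1
            linarith
          rw [hx₀n] at hnz
          have hαz : α * ((1 + s) * ‖x‖ - s * 1) ≤ α * ‖z‖ :=
            mul_le_mul_of_nonneg_left hnz hαpos.le
          have hfzv : f z = (1 + s) * f x + s * f x₀ := by
            rw [hzdef, map_add, map_smul, map_add, smul_eq_mul]; ring
          have hfx₀' : M + u ≤ f x₀ := hCM _ hx₀
          have h5 : (1 + s) * f x + s * f x₀ + α * ((1 + s) * ‖x‖ - s * 1)
              ≤ f z + α * ‖z‖ := by rw [hfzv]; linarith
          have h6 : 0 < s * (f x₀ - α) := mul_pos hs (by linarith)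
          have h7 : (1 + s) * f x + s * f x₀ + α * ((1 + s) * ‖x‖ - s * 1)
              = (1 + s) * (f x + α * ‖x‖) + s * (f x₀ - α) := by ring
          rw [h, mul_zero, zero_add] at h7
          linarith
      · have hopen : IsOpen {x : X | f x + α * ‖x‖ < 0} := by
          have hc : Continuous fun x : X => f x + α * ‖x‖ := by fun_prop
          exact isOpen_lt hc continuous_const
        refine interior_maximal ?_ hopen
        intro v hv
        have hv' : f v + α * ‖v‖ < 0 := hv
        show f v + α * ‖v‖ ≤ 0
        exact le_of_lt hv'
    refine ⟨⟨hg0, hαpos, hkey⟩, ?_, hSsubEq, ?_, ?_⟩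
    · intro x hx
      rw [hSsubEq]
      obtain ⟨hxneg, hx0⟩ := hx
      have hxC : -x ∈ C := Set.mem_neg.1 hxneg
      have hx0' : x ≠ 0 := by simpa using hx0
      have h := hkey (-x) hxC (by simpa using hx0')
      have hmap : f (-x) = -f x := map_neg f x
      show f x + α * ‖x‖ < 0
      rw [show ‖x‖ = ‖-x‖ from (norm_neg x).symm]
      linarith
    · rw [hSsubEq]
      intro x hx
      have hxlt : f x + α * ‖x‖ < 0 := hx
      have hx0 : x ≠ 0 := by
        intro e; rw [e] at hxlt; simp at hxlt
      have hxpos : 0 < ‖x‖ := norm_pos_iff.2 hx0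
      rw [Set.mem_neg]
      by_contra hxK
      have hyn : ‖(‖x‖⁻¹ • (-x))‖ = 1 := by
        rw [norm_smul, norm_inv, norm_norm, norm_neg, inv_mul_cancel₀ hxpos.ne']
      have hy : ‖x‖⁻¹ • (-x) ∉ interior (epsCone C ε) := by
        intro hyint
        apply hxK
        have h2 := hKcone hxpos.le (interior_subset hyint)
        rwa [smul_inv_smul₀ hxpos.ne'] at h2
      have h := hstar _ hyn hy
      rw [map_smul, smul_eq_mul, map_neg] at h
      have h9 : ‖x‖⁻¹ * (-f x) < α := h
      rw [inv_mul_eq_div, div_lt_iff₀ hxpos] at h9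
      linarith
    · intro x hxint hx0
      have hxpos : 0 < ‖x‖ := norm_pos_iff.2 hx0
      have hyn : ‖(‖x‖⁻¹ • (-x))‖ = 1 := by
        rw [norm_smul, norm_inv, norm_norm, norm_neg, inv_mul_cancel₀ hxpos.ne']
      have hy : ‖x‖⁻¹ • (-x) ∉ interior (epsCone C ε) := by
        intro hyint
        apply hxint
        rw [interior_neg'', Set.mem_neg]
        have h2 := smul_mem_interior_cone' hKcone hxpos hyint
        rwa [smul_inv_smul₀ hxpos.ne'] at h2
      have h := hstar _ hyn hy
      rw [map_smul, smul_eq_mul, map_neg] at h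
      have h9 : ‖x‖⁻¹ * (-f x) < α := h
      rw [inv_mul_eq_div, div_lt_iff₀ hxpos] at h9
      linarith
  · -- backward direction
    rintro ⟨δ₁, δ₂, hδ₁, hδ₁₂, f, hf⟩
    obtain ⟨hA1, -, -, -, hA5⟩ :=
      hf (δ₁ + (δ₂ - δ₁) / 3) ⟨by linarith, by linarith⟩
    obtain ⟨hB1, -, -, -, -⟩ :=
      hf (δ₁ + 2 * (δ₂ - δ₁) / 3) ⟨by linarith, by linarith⟩
    have hαpos : 0 < δ₁ + (δ₂ - δ₁) / 3 := by linarith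
    have hAbound : convexHull ℝ (C ∩ sphere (0 : X) 1) ⊆
        {v : X | δ₁ + 2 * (δ₂ - δ₁) / 3 ≤ f v} := by
      apply convexHull_min ?_ (convex_halfSpace_ge ⟨map_add f, map_smul f⟩ _)
      intro x hx
      have hxn : ‖x‖ = 1 := mem_sphere_zero_iff_norm.1 hx.2
      have hx0 : x ≠ 0 := by intro e; rw [e, norm_zero] at hxn; norm_num at hxn
      have h := hB1.2.2 x hx.1 hx0
      rw [hxn, mul_one] at h
      exact le_of_lt h
    have hBbound : convexHull ℝ ((frontier (epsCone C ε) ∩ sphere (0 : X) 1) ∪ {(0 : X)}) ⊆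
        {v : X | f v ≤ δ₁ + (δ₂ - δ₁) / 3} := by
      apply convexHull_min ?_ (convex_halfSpace_le ⟨map_add f, map_smul f⟩ _)
      intro y hy
      rcases hy with hy | hy
      · have hyn : ‖y‖ = 1 := mem_sphere_zero_iff_norm.1 hy.2
        have hyne : -y ≠ 0 := by
          intro e
          rw [show y = 0 from by simpa using congrArg Neg.neg e, norm_zero] at hyn
          norm_num at hyn
        have hnotint : -y ∉ interior (-(epsCone C ε)) := by
          rw [interior_neg'', Set.mem_neg, neg_neg]
          exact hy.1.2
        have h := hA5 (-y) hnotint hyne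
        rw [map_neg, norm_neg, hyn, mul_one] at h
        show f y ≤ _
        linarith
      · have hy0 : y = 0 := hy
        rw [hy0]
        show f 0 ≤ _
        rw [map_zero]
        linarith
    intro hmem
    have hclos : closure (convexHull ℝ (C ∩ sphere (0 : X) 1) -
        convexHull ℝ ((frontier (epsCone C ε) ∩ sphere (0 : X) 1) ∪ {(0 : X)})) ⊆
        {v : X | (δ₂ - δ₁) / 3 ≤ f v} := by
      apply closure_minimal ?_ (isClosed_le continuous_const f.continuous)
      intro d hd
      rw [Set.mem_sub] at hd
      obtain ⟨p, hp, q, hq, rfl⟩ := hd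
      have h1 := hAbound hp
      have h2 := hBbound hq
      show (δ₂ - δ₁) / 3 ≤ f (p - q)
      rw [map_sub]
      have h1' : δ₁ + 2 * (δ₂ - δ₁) / 3 ≤ f p := h1
      have h2' : f q ≤ δ₁ + (δ₂ - δ₁) / 3 := h2
      linarith
    have h := hclos hmem
    have h' : (δ₂ - δ₁) / 3 ≤ f 0 := h
    rw [map_zero] at h'
    linarith
end

section
/- Let X be a real normed space, C ⊆ X a nontrivial convex cone, B a bounded base of C, and 0 < ε < min{1, δ_B}. Then the following are equivalent: (i) the pair (C, C_{(B,ε)}) has the strict separation property; (ii) there exist δ₂ > δ₁ > 0 and f ∈ X* such that for every α ∈ (δ₁, δ₂): (f,α) ∈ C^{a#}_+, −C \ {0} ⊆ int(S(f,α)) = {x ∈ X : f(x) + α‖x‖ < 0} ⊆ −C_{(B,ε)}, and f(x) + α‖x‖ > 0 whenever x ∈ X \ int(−C_{(B,ε)}) and x ≠ 0. -/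
open Set Metric Pointwise

open HenigPaper

variable {X : Type*} [NormedAddCommGroup X] [NormedSpace ℝ X]

/-!
Write `K = C_{(B,ε)}`. If `(C, K)` has the SSP, Hahn–Banach gives `f` and `u > 0` with
`f e + u < f a` for all `a ∈ C ∩ S_X` and `e ∈ (bd K ∩ S_X) ∪ {0}`; put `i = inf f(C ∩ S_X) ≥ u`.
A unit vector `y ∉ int K` also satisfies `f y ≤ i - u`: the segment from `y` to any
`a ∈ C ∩ S_X ⊆ int K` leaves `int K` through a point `w ∈ bd K` with `‖w‖ ≤ 1`, and
`f w ≤ ‖w‖ (f a - u)` by homogeneity. So every `α ∈ (i - u/2, i)` has `f > α` on `C ∩ S_X` and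
`f < α` on the unit vectors outside `int K`, which after scaling are the inequalities of (ii).
Since `f + α‖·‖` is subadditive and negative on `-C \ {0}`, the interior of `S(f, α)` is its
strict sublevel set. Conversely, two values `α₁ < α₂` from the interval give `f ≥ α₂` on
`C ∩ S_X` and `f ≤ α₁` on `(bd K ∩ S_X) ∪ {0}`, and this gap survives convex hulls and closure.
-/

theorem IsPreconnected.inter_frontier_nonempty {α : Type*} [TopologicalSpace α] {s t : Set α}
    (hs : IsPreconnected s) {x y : α} (hx : x ∈ s ∩ interior t) (hy : y ∈ s)
    (hyt : y ∉ interior t) : (s ∩ frontier t).Nonempty := by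
  by_contra h
  have hsub : s ⊆ interior t ∪ (closure t)ᶜ := fun z hz => by
    by_contra hz'
    simp only [mem_union, mem_compl_iff, not_or, not_not] at hz'
    exact h ⟨z, hz, hz'.2, hz'.1⟩
  exact hyt (hs.subset_left_of_subset_union isOpen_interior isClosed_closure.isOpen_compl
    (disjoint_compl_right.mono_left interior_subset_closure) hsub ⟨x, hx⟩ hy)

theorem interior_neg_eq {G : Type*} [TopologicalSpace G] [InvolutiveNeg G] [ContinuousNeg G]
    (s : Set G) : interior (-s) = -interior s :=
  ((Homeomorph.neg G).preimage_interior s).symm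

theorem zero_notMem_closure_convexHull_sub {E : Type*} [NormedAddCommGroup E] [NormedSpace ℝ E]
    {A B : Set E} (f : E →L[ℝ] ℝ) {β γ : ℝ} (hA : ∀ a ∈ A, β ≤ f a) (hB : ∀ b ∈ B, f b ≤ γ)
    (hγβ : γ < β) : (0 : E) ∉ closure (convexHull ℝ A - convexHull ℝ B) := by
  have hA' := convexHull_min hA (convex_halfSpace_ge f.toLinearMap.isLinear β)
  have hB' := convexHull_min hB (convex_halfSpace_le f.toLinearMap.isLinear γ)
  have hsub : convexHull ℝ A - convexHull ℝ B ⊆ {x | β - γ ≤ f x} := by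
    rintro _ ⟨a, ha, b, hb, rfl⟩
    have ha' : β ≤ f a := hA' ha
    have hb' : f b ≤ γ := hB' hb
    show β - γ ≤ f (a - b)
    rw [map_sub]
    linarith
  intro h0
  have := closure_minimal hsub (isClosed_le continuous_const f.continuous) h0
  change β - γ ≤ f 0 at this
  rw [map_zero] at this
  linarith

namespace HenigPaper

theorem isCone_coneGen (A : Set X) : IsCone (coneGen A) := by
  rintro l hl _ ⟨m, hm, a, ha, rfl⟩
  exact ⟨l * m, mul_nonneg hl hm, a, ha, smul_smul l m a⟩

theorem IsCone.smul_set_eq {K : Set X} (hK : IsCone K) {c : ℝ} (hc : 0 < c) : c • K = K := by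
  refine (smul_set_subset_iff.2 fun x hx => hK hc.le hx).antisymm fun x hx => ?_
  exact ⟨c⁻¹ • x, hK (inv_nonneg.2 hc.le) hx, smul_inv_smul₀ hc.ne' x⟩

theorem IsCone.smul_mem_interior_iff {K : Set X} (hK : IsCone K) {c : ℝ} (hc : 0 < c) {x : X} :
    c • x ∈ interior K ↔ x ∈ interior K := by
  conv_lhs => rw [← hK.smul_set_eq hc, interior_smul₀ hc.ne']
  exact smul_mem_smul_set_iff₀ hc.ne' _ _

theorem IsCone.smul_mem_frontier_iff {K : Set X} (hK : IsCone K) {c : ℝ} (hc : 0 < c) {x : X} :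
    c • x ∈ frontier K ↔ x ∈ frontier K := by
  conv_lhs => rw [← hK.smul_set_eq hc, frontier, closure_smul₀' hc.ne', interior_smul₀ hc.ne',
    ← smul_set_sdiff₀ hc.ne']
  exact smul_mem_smul_set_iff₀ hc.ne' _ _

theorem subset_interior_henigCone {C B : Set X} (hB : IsBase C B) {ε : ℝ} (hε : 0 < ε) :
    C \ {0} ⊆ interior (henigCone B ε) := by
  rintro x ⟨hx, hx0⟩
  obtain ⟨⟨l, b⟩, ⟨hl, hb, rfl⟩, -⟩ := hB.2.2.2.2 x hx hx0
  have hball : ball b ε ⊆ henigCone B ε := fun w hw =>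
    ⟨1, zero_le_one, w, (infDist_le_dist_of_mem hb).trans hw.le, (one_smul ℝ w).symm⟩
  exact ((isCone_coneGen _).smul_mem_interior_iff hl).2
    (mem_interior.2 ⟨_, hball, isOpen_ball, mem_ball_self hε⟩)

open Filter Topology in
theorem interior_Ssub {f : X →L[ℝ] ℝ} {α : ℝ} (hα : 0 ≤ α) {p : X} (hp : f p + α * ‖p‖ < 0) :
    interior (Ssub f α) = {x | f x + α * ‖x‖ < 0} := by
  refine Subset.antisymm (fun x hx => ?_)
    (interior_maximal (fun _ hx => le_of_lt (α := ℝ) hx) (isOpen_lt (by fun_prop) continuous_const))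
  have hlim : Tendsto (fun s : ℝ => x - s • p) (𝓝[>] 0) (𝓝 x) := by
    have : Continuous fun s : ℝ => x - s • p := by fun_prop
    simpa using (this.tendsto 0).mono_left nhdsWithin_le_nhds
  obtain ⟨s, hsS, hs⟩ :=
    ((hlim.eventually (mem_interior_iff_mem_nhds.1 hx)).and self_mem_nhdsWithin).exists
  have hs' : (0 : ℝ) < s := hs
  calc f x + α * ‖x‖ = f (x - s • p) + s * f p + α * ‖(x - s • p) + s • p‖ := by simp
    _ ≤ (f (x - s • p) + α * ‖x - s • p‖) + s * (f p + α * ‖p‖) := by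
      have := norm_add_le (x - s • p) (s • p)
      rw [norm_smul, Real.norm_of_nonneg hs'.le] at this
      nlinarith
    _ < 0 := add_neg_of_nonpos_of_neg hsS (mul_neg_of_pos_of_neg hs' hp)

theorem add_le_of_frontier_sphere {K : Set X} (hK : IsCone K) (f : X →L[ℝ] ℝ) {u : ℝ}
    (hu : 0 ≤ u) {a : X} (ha : a ∈ interior K) (ha1 : ‖a‖ ≤ 1) (hua : u ≤ f a)
    (hgap : ∀ e ∈ frontier K ∩ sphere 0 1, f e + u < f a) {y : X} (hy1 : ‖y‖ ≤ 1)
    (hy : y ∉ interior K) : f y + u ≤ f a := by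
  obtain ⟨w, ⟨s, t, hs, ht, hst, rfl⟩, hwK⟩ :=
    (convex_segment y a).isPreconnected.inter_frontier_nonempty
      ⟨right_mem_segment ℝ y a, ha⟩ (left_mem_segment ℝ y a) hy
  obtain rfl : t = 1 - s := by linarith
  have hw : f (s • y + (1 - s) • a) ≤ f a - u := by
    set w := s • y + (1 - s) • a
    rcases eq_or_ne w 0 with hw0 | hw0
    · rw [hw0, map_zero]; linarith
    have hnorm : ‖w‖ ≤ 1 := by
      calc ‖w‖ ≤ s * ‖y‖ + (1 - s) * ‖a‖ := by
            simpa [norm_smul, abs_of_nonneg hs, abs_of_nonneg ht] using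
              norm_add_le (s • y) ((1 - s) • a)
        _ ≤ s * 1 + (1 - s) * 1 := by gcongr
        _ = 1 := by ring
    have hv := hgap (‖w‖⁻¹ • w)
      ⟨(hK.smul_mem_frontier_iff (inv_pos.2 (norm_pos_iff.2 hw0))).2 hwK, by simp [norm_smul, hw0]⟩
    calc f w = ‖w‖ * f (‖w‖⁻¹ • w) := by
          rw [map_smul, smul_eq_mul, mul_inv_cancel_left₀ (norm_ne_zero_iff.2 hw0)]
      _ ≤ ‖w‖ * (f a - u) := mul_le_mul_of_nonneg_left (by linarith) (norm_nonneg _)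
      _ ≤ f a - u := mul_le_of_le_one_left (sub_nonneg.2 hua) hnorm
  rcases hs.eq_or_lt with rfl | hs0
  · exact absurd (by simpa using ha) hwK.2
  have : s * (f y + u - f a) ≤ 0 := by
    simp only [map_add, map_smul, smul_eq_mul] at hw
    nlinarith
  linarith [nonpos_of_mul_nonpos_right this hs0]

theorem SSP.exists_gap {C K : Set X} (h : SSP C K) :
    ∃ (f : X →L[ℝ] ℝ) (u : ℝ), 0 < u ∧
      ∀ a ∈ C ∩ sphere 0 1, ∀ e ∈ (frontier K ∩ sphere 0 1) ∪ {0}, f e + u < f a := by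
  obtain ⟨f, u, hu, hf⟩ := geometric_hahn_banach_point_closed
    ((convex_convexHull ℝ _).sub (convex_convexHull ℝ _)).closure isClosed_closure h
  refine ⟨f, u, by simpa using hu, fun a ha e he => ?_⟩
  have := hf _ (subset_closure (sub_mem_sub (subset_convexHull ℝ _ ha) (subset_convexHull ℝ _ he)))
  rw [map_sub] at this
  linarith

theorem memAugDualSharpPlus_of_lt_on_sphere {C : Set X} (hC : IsCone C) {f : X →L[ℝ] ℝ} {α : ℝ}
    (hα : 0 < α) (h : ∀ a ∈ C ∩ sphere 0 1, α < f a) : MemAugDualSharpPlus C f α := by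
  have hlt : ∀ x ∈ C, x ≠ 0 → α * ‖x‖ < f x := fun x hx hx0 => by
    have hpos := norm_pos_iff.2 hx0
    have := h (‖x‖⁻¹ • x) ⟨hC (inv_nonneg.2 hpos.le) hx, by simp [norm_smul, hx0]⟩
    rwa [map_smul, smul_eq_mul, ← div_eq_inv_mul, lt_div_iff₀ hpos] at this
  exact ⟨fun x hx hx0 => (mul_pos hα (norm_pos_iff.2 hx0)).trans (hlt x hx hx0), hα, hlt⟩

theorem pos_of_notMem_interior_neg {K : Set X} (hK : IsCone K) {f : X →L[ℝ] ℝ} {α : ℝ}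
    (h : ∀ y ∈ sphere (0 : X) 1, y ∉ interior K → f y < α) {x : X} (hx : x ∉ interior (-K))
    (hx0 : x ≠ 0) : 0 < f x + α * ‖x‖ := by
  have hpos := norm_pos_iff.2 hx0
  have hy : ‖x‖⁻¹ • -x ∉ interior K := by
    rw [hK.smul_mem_interior_iff (inv_pos.2 hpos)]
    rwa [interior_neg_eq, mem_neg] at hx
  have := h _ (by simp [norm_smul, hx0]) hy
  rw [map_smul, smul_eq_mul, map_neg, ← div_eq_inv_mul, div_lt_iff₀ hpos] at this
  linarith

theorem sublevel_conditions_of_sphere_bounds {C K : Set X} (hC : IsCone C) (hK : IsCone K) {c : X}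
    (hc : c ∈ C) (hc0 : c ≠ 0) {f : X →L[ℝ] ℝ} {α : ℝ} (hα : 0 < α)
    (hCS : ∀ a ∈ C ∩ sphere 0 1, α < f a)
    (hKS : ∀ y ∈ sphere (0 : X) 1, y ∉ interior K → f y < α) :
    MemAugDualSharpPlus C f α ∧
      (-C) \ {(0 : X)} ⊆ interior (Ssub f α) ∧
      interior (Ssub f α) = {x : X | f x + α * ‖x‖ < 0} ∧
      interior (Ssub f α) ⊆ -K ∧
      ∀ x : X, x ∉ interior (-K) → x ≠ 0 → 0 < f x + α * ‖x‖ := by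
  have hsharp := memAugDualSharpPlus_of_lt_on_sphere hC hα hCS
  have hpos : ∀ x : X, x ∉ interior (-K) → x ≠ 0 → 0 < f x + α * ‖x‖ :=
    fun x => pos_of_notMem_interior_neg hK hKS
  have hnegC : ∀ x ∈ (-C) \ {0}, f x + α * ‖x‖ < 0 := by
    rintro x ⟨hx, hx0⟩
    have := hsharp.2.2 (-x) hx (neg_ne_zero.2 hx0)
    rw [map_neg, norm_neg] at this
    linarith
  have hint := interior_Ssub hα.le (hnegC (-c) ⟨by simpa using hc, by simpa using hc0⟩)
  refine ⟨hsharp, hint ▸ hnegC, hint, fun x hx => ?_, hpos⟩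
  by_contra hxK
  rw [hint] at hx
  have hx0 : x ≠ 0 := by rintro rfl; simp at hx
  exact (hpos x (fun h => hxK (interior_subset h)) hx0).not_gt hx

theorem SSP.exists_forall_Ioo {C K : Set X} (hC : IsCone C) (hK : IsCone K)
    (hCK : C \ {0} ⊆ interior K) {c : X} (hc : c ∈ C) (hc0 : c ≠ 0) (h : SSP C K) :
    ∃ δ₁ δ₂ : ℝ, 0 < δ₁ ∧ δ₁ < δ₂ ∧ ∃ f : X →L[ℝ] ℝ, ∀ α ∈ Ioo δ₁ δ₂,
      MemAugDualSharpPlus C f α ∧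
      (-C) \ {(0 : X)} ⊆ interior (Ssub f α) ∧
      interior (Ssub f α) = {x : X | f x + α * ‖x‖ < 0} ∧
      interior (Ssub f α) ⊆ -K ∧
      ∀ x : X, x ∉ interior (-K) → x ≠ 0 → 0 < f x + α * ‖x‖ := by
  obtain ⟨f, u, hu, hgap⟩ := h.exists_gap
  have hfS : ∀ a ∈ C ∩ sphere 0 1, u < f a := fun a ha => by simpa using hgap a ha 0 (Or.inr rfl)
  have hSne : (f '' (C ∩ sphere 0 1)).Nonempty :=
    ⟨_, mem_image_of_mem f ⟨hC (inv_nonneg.2 (norm_nonneg c)) hc, by simp [norm_smul, hc0]⟩⟩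
  have hbdd : BddBelow (f '' (C ∩ sphere 0 1)) := ⟨u, forall_mem_image.2 fun a ha => (hfS a ha).le⟩
  set i := sInf (f '' (C ∩ sphere 0 1))
  have hui : u ≤ i := le_csInf hSne (forall_mem_image.2 fun a ha => (hfS a ha).le)
  have hiS : ∀ a ∈ C ∩ sphere 0 1, i ≤ f a := fun a ha => csInf_le hbdd (mem_image_of_mem f ha)
  have hout : ∀ y ∈ sphere (0 : X) 1, y ∉ interior K → f y + u ≤ i := fun y hy hyK =>
    le_csInf hSne <| forall_mem_image.2 fun a ha =>
      add_le_of_frontier_sphere hK f hu.le (hCK ⟨ha.1, ne_of_mem_sphere ha.2 one_ne_zero⟩)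
        (mem_sphere_zero_iff_norm.1 ha.2).le (hfS a ha).le (fun e he => hgap a ha e (Or.inl he))
        (mem_sphere_zero_iff_norm.1 hy).le hyK
  refine ⟨i - u / 2, i, by linarith, by linarith, f, fun α ⟨hα₁, hα₂⟩ => ?_⟩
  exact sublevel_conditions_of_sphere_bounds hC hK hc hc0 (by linarith)
    (fun a ha => hα₂.trans_le (hiS a ha)) (fun y hy hyK => by linarith [hout y hy hyK])

theorem ssp_of_memAugDualSharpPlus {C K : Set X} {f : X →L[ℝ] ℝ} {α₁ α₂ : ℝ} (hα₁ : 0 ≤ α₁)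
    (hα : α₁ < α₂) (h₂ : MemAugDualSharpPlus C f α₂)
    (h₁ : ∀ x : X, x ∉ interior (-K) → x ≠ 0 → 0 < f x + α₁ * ‖x‖) : SSP C K := by
  refine zero_notMem_closure_convexHull_sub f (fun a ha => ?_) (fun e he => ?_) hα
  · have := h₂.2.2 a ha.1 (ne_of_mem_sphere ha.2 one_ne_zero)
    rw [mem_sphere_zero_iff_norm.1 ha.2, mul_one] at this
    exact this.le
  · rcases he with ⟨hfr, he1⟩ | rfl
    · have := h₁ (-e) (by rw [interior_neg_eq, mem_neg, neg_neg]; exact hfr.2)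
        (neg_ne_zero.2 (ne_of_mem_sphere he1 one_ne_zero))
      rw [map_neg, norm_neg, mem_sphere_zero_iff_norm.1 he1, mul_one] at this
      linarith
    · simpa using hα₁

theorem ssp_iff_exists_forall_Ioo {C K : Set X} (hC : IsCone C) (hK : IsCone K)
    (hCK : C \ {0} ⊆ interior K) {c : X} (hc : c ∈ C) (hc0 : c ≠ 0) :
    SSP C K ↔ ∃ δ₁ δ₂ : ℝ, 0 < δ₁ ∧ δ₁ < δ₂ ∧ ∃ f : X →L[ℝ] ℝ, ∀ α ∈ Ioo δ₁ δ₂,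
      MemAugDualSharpPlus C f α ∧
      (-C) \ {(0 : X)} ⊆ interior (Ssub f α) ∧
      interior (Ssub f α) = {x : X | f x + α * ‖x‖ < 0} ∧
      interior (Ssub f α) ⊆ -K ∧
      ∀ x : X, x ∉ interior (-K) → x ≠ 0 → 0 < f x + α * ‖x‖ := by
  refine ⟨SSP.exists_forall_Ioo hC hK hCK hc hc0, fun ⟨δ₁, δ₂, hδ₁, hδ, f, hf⟩ => ?_⟩
  have h₁ := hf ((2 * δ₁ + δ₂) / 3) ⟨by linarith, by linarith⟩
  have h₂ := hf ((δ₁ + 2 * δ₂) / 3) ⟨by linarith, by linarith⟩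
  exact ssp_of_memAugDualSharpPlus (by linarith) (by linarith) h₂.1 h₁.2.2.2.2

end HenigPaper

theorem stmt10_general (C B : Set X) (hC : NontrivialCone C)
    (hB : IsBase C B)
    (ε : ℝ) (h0 : 0 < ε) :
    SSP C (henigCone B ε) ↔
      ∃ δ₁ δ₂ : ℝ, 0 < δ₁ ∧ δ₁ < δ₂ ∧ ∃ f : X →L[ℝ] ℝ,
        ∀ α ∈ Set.Ioo δ₁ δ₂,
          MemAugDualSharpPlus C f α ∧
          (-C) \ {(0 : X)} ⊆ interior (Ssub f α) ∧
          interior (Ssub f α) = {x : X | f x + α * ‖x‖ < 0} ∧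
          interior (Ssub f α) ⊆ -(henigCone B ε) ∧
          ∀ x : X, x ∉ interior (-(henigCone B ε)) → x ≠ 0 → 0 < f x + α * ‖x‖ := by
  obtain ⟨b, hb⟩ := hB.1
  exact ssp_iff_exists_forall_Ioo hC.1 (isCone_coneGen _) (subset_interior_henigCone hB h0)
    (hB.2.2.1 hb) fun h => hB.2.2.2.1 (h ▸ subset_closure hb)

/-- Characterization of the SSP for the pair `(C, C_{(B,ε)})`. -/
theorem stmt10 (C B : Set X) (hC : NontrivialCone C) (hconv : ConeConvex C)
    (hB : IsBase C B) (hBb : Bornology.IsBounded B)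
    (ε : ℝ) (h0 : 0 < ε) (h1 : ε < 1) (h2 : ε < deltaB B) :
    SSP C (henigCone B ε) ↔
      ∃ δ₁ δ₂ : ℝ, 0 < δ₁ ∧ δ₁ < δ₂ ∧ ∃ f : X →L[ℝ] ℝ,
        ∀ α ∈ Set.Ioo δ₁ δ₂,
          MemAugDualSharpPlus C f α ∧
          (-C) \ {(0 : X)} ⊆ interior (Ssub f α) ∧
          interior (Ssub f α) = {x : X | f x + α * ‖x‖ < 0} ∧
          interior (Ssub f α) ⊆ -(henigCone B ε) ∧
          ∀ x : X, x ∉ interior (-(henigCone B ε)) → x ≠ 0 → 0 < f x + α * ‖x‖ :=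
  stmt10_general C B hC hB ε h0
end

section
/- Let X be a real normed space partially ordered by a nontrivial pointed convex cone C, and let A ⊆ X. Assume that (C, C_ε) has the strict separation property for every 0 < ε < 1. If there exist x₀ ∈ A and 0 < δ < 1 such that the section (x₀ − C_δ) ∩ A is weakly compact, then (x₀ − C_δ) ∩ A ∩ GHe(A, C) ≠ ∅. -/
open Set Metric Pointwise

open HenigPaper

variable {X : Type*} [NormedAddCommGroup X] [NormedSpace ℝ X]


/-- Existence of Henig global proper efficient points in a weakly compact
section given by an `ε`-conic neighbourhood. -/
theorem stmt12 (C : Set X) (hC : NontrivialCone C) (hpt : PointedCone' C)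
    (hconv : ConeConvex C) (A : Set X)
    (hssp : ∀ ε : ℝ, 0 < ε → ε < 1 → SSP C (epsCone C ε))
    (x₀ : X) (hx₀ : x₀ ∈ A) (δ : ℝ) (h0 : 0 < δ) (h1 : δ < 1)
    (hcpt : WeaklyCompact ((({x₀} : Set X) - epsCone C δ) ∩ A)) :
    ((({x₀} : Set X) - epsCone C δ) ∩ A ∩ GHe A C).Nonempty := by
  classical
  set Cs : Set X := C ∩ sphere (0 : X) 1 with hCs
  set D : Set X := epsCone C δ with hD
  -- a unit vector in C
  obtain ⟨c, hcC, hc0⟩ : ∃ c ∈ C, c ≠ 0 := by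
    obtain ⟨hsub, hne⟩ := hC.2.1
    obtain ⟨c, hc1, hc2⟩ := Set.exists_of_ssubset hC.2.1
    exact ⟨c, hc1, by simpa using hc2⟩
  have hcnorm : (0:ℝ) < ‖c‖ := norm_pos_iff.2 hc0
  set c₀ : X := ‖c‖⁻¹ • c with hc₀def
  have hc₀C : c₀ ∈ C := hC.1 (by positivity) hcC
  have hc₀n : ‖c₀‖ = 1 := by
    rw [hc₀def, norm_smul, norm_inv, norm_norm, inv_mul_cancel₀ hcnorm.ne']
  have hc₀Cs : c₀ ∈ Cs := ⟨hc₀C, by simpa [mem_sphere_zero_iff_norm] using hc₀n⟩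
  have hCsne : Cs.Nonempty := ⟨c₀, hc₀Cs⟩
  have h0D : (0:X) ∈ D := by
    refine ⟨0, le_refl 0, c₀, ?_, by simp⟩
    simpa using (infDist_zero_of_mem hc₀Cs).le.trans h0.le
  have hDcone : IsCone D := by
    rintro l hl x ⟨l', hl', a, ha, rfl⟩
    exact ⟨l * l', mul_nonneg hl hl', a, ha, smul_smul l l' a⟩
  -- c₀ is interior to D
  have hballD : ball c₀ δ ⊆ D := by
    intro x hx
    refine ⟨1, zero_le_one, x, ?_, (one_smul ℝ x).symm⟩
    exact le_trans (infDist_le_dist_of_mem hc₀Cs) (le_of_lt hx)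
  have hc₀int : c₀ ∈ interior D := by
    rw [mem_interior]
    exact ⟨ball c₀ δ, hballD, isOpen_ball, mem_ball_self h0⟩
  -- Hahn-Banach separation from the SSP hypothesis
  set F : Set X := frontier D ∩ sphere (0 : X) 1 with hF
  set Dset : Set X := convexHull ℝ Cs - convexHull ℝ (F ∪ {(0:X)}) with hDset
  have hDconvex : Convex ℝ (closure Dset) :=
    ((convex_convexHull ℝ _).sub (convex_convexHull ℝ _)).closure
  obtain ⟨g, u, hgu, hub⟩ := geometric_hahn_banach_point_closed hDconvex isClosed_closure
    (hssp δ h0 h1)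
  have hu0 : 0 < u := by simpa using hgu
  have hsep : ∀ x ∈ Dset, u < g x := fun x hx => hub x (subset_closure hx)
  have hgC : ∀ x ∈ Cs, u < g x := by
    intro x hx
    have : x - 0 ∈ Dset := Set.sub_mem_sub (subset_convexHull ℝ _ hx)
      (subset_convexHull ℝ _ (Set.mem_union_right _ rfl))
    simpa using hsep _ this
  have hgF : ∀ b ∈ F, ∀ x ∈ Cs, u < g x - g b := by
    intro b hb x hx
    have : x - b ∈ Dset := Set.sub_mem_sub (subset_convexHull ℝ _ hx)
      (subset_convexHull ℝ _ (Set.mem_union_left _ hb))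
    simpa using hsep _ this
  -- infimum of g over Cs
  set m : ℝ := sInf (g '' Cs) with hm
  have hbdd : BddBelow (g '' Cs) := ⟨u, by rintro - ⟨x, hx, rfl⟩; exact (hgC x hx).le⟩
  have hum : u ≤ m := le_csInf (hCsne.image g) (by rintro - ⟨x, hx, rfl⟩; exact (hgC x hx).le)
  have hmle : ∀ x ∈ Cs, m ≤ g x := fun x hx => csInf_le hbdd ⟨x, hx, rfl⟩
  have hFm : ∀ b ∈ F, g b ≤ m - u := by
    intro b hb
    have : g b + u ≤ m := le_csInf (hCsne.image g)
      (by rintro - ⟨x, hx, rfl⟩; linarith [hgF b hb x hx])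
    linarith
  set β : ℝ := m - u / 2 with hβ
  have hβpos : 0 < β := by simp only [hβ]; linarith
  have hβm : β < m := by simp only [hβ]; linarith
  -- the Bishop-Phelps-type cone K
  set K : Set X := {x : X | β * ‖x‖ ≤ g x} with hK
  have hKcone : IsCone K := by
    intro l hl x hx
    simp only [hK, mem_setOf_eq] at hx ⊢
    rw [norm_smul, Real.norm_eq_abs, abs_of_nonneg hl, map_smul]
    calc β * (l * ‖x‖) = l * (β * ‖x‖) := by ring
    _ ≤ l * g x := mul_le_mul_of_nonneg_left hx hl
    _ = l • g x := rfl
  have hKconvex : Convex ℝ K := by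
    intro x hx y hy a b ha hb hab
    simp only [hK, mem_setOf_eq] at hx hy ⊢
    have : β * ‖a • x + b • y‖ ≤ a * (β * ‖x‖) + b * (β * ‖y‖) := by
      calc β * ‖a • x + b • y‖ ≤ β * (‖a • x‖ + ‖b • y‖) :=
            mul_le_mul_of_nonneg_left (norm_add_le _ _) hβpos.le
      _ = a * (β * ‖x‖) + b * (β * ‖y‖) := by
            rw [norm_smul, norm_smul, Real.norm_eq_abs, Real.norm_eq_abs,
              abs_of_nonneg ha, abs_of_nonneg hb]; ring
    calc β * ‖a • x + b • y‖ ≤ a * (β * ‖x‖) + b * (β * ‖y‖) := this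
    _ ≤ a * g x + b * g y := by
        gcongr
    _ = g (a • x + b • y) := by simp [map_add, map_smul]
  have hKmemadd : ∀ x ∈ K, ∀ y ∈ K, x + y ∈ K := by
    intro x hx y hy
    simp only [hK, mem_setOf_eq] at hx hy ⊢
    calc β * ‖x + y‖ ≤ β * (‖x‖ + ‖y‖) :=
          mul_le_mul_of_nonneg_left (norm_add_le _ _) hβpos.le
    _ = β * ‖x‖ + β * ‖y‖ := by ring
    _ ≤ g x + g y := add_le_add hx hy
    _ = g (x + y) := (map_add g x y).symm
  have hKadd : ConeConvex K := by
    rw [ConeConvex]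
    apply Set.Subset.antisymm
    · rintro - ⟨x, hx, y, hy, rfl⟩
      exact hKmemadd x hx y hy
    · intro x hx
      exact ⟨x, hx, 0, by simp [hK], by simp⟩
  have h0K : (0:X) ∈ K := by simp [hK]
  have hgpos : ∀ x ∈ K, x ≠ 0 → 0 < g x := by
    intro x hx hx0
    have : 0 < β * ‖x‖ := mul_pos hβpos (norm_pos_iff.2 hx0)
    exact lt_of_lt_of_le this hx
  have hCsK : ∀ x ∈ Cs, β * ‖x‖ < g x := by
    intro x hx
    have hx1 : ‖x‖ = 1 := by simpa [mem_sphere_zero_iff_norm] using hx.2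
    rw [hx1, mul_one]
    exact lt_of_lt_of_le hβm (hmle x hx)
  have hCint : C \ {(0:X)} ⊆ interior K := by
    set U : Set X := {x : X | β * ‖x‖ < g x} with hU
    have hUopen : IsOpen U := isOpen_lt (by fun_prop) g.continuous
    have hUK : U ⊆ K := by
      intro x hx
      simp only [hU, mem_setOf_eq] at hx
      simp only [hK, mem_setOf_eq]
      exact le_of_lt hx
    refine fun x hx => interior_maximal hUK hUopen ?_
    obtain ⟨hxC, hx0⟩ := hx
    have hx0' : x ≠ 0 := by simpa using hx0
    have hxn : (0:ℝ) < ‖x‖ := norm_pos_iff.2 hx0'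
    have hxs : ‖x‖⁻¹ • x ∈ Cs := by
      refine ⟨hC.1 (by positivity) hxC, ?_⟩
      simp [mem_sphere_zero_iff_norm, norm_smul, inv_mul_cancel₀ hxn.ne']
    have := hCsK _ hxs
    rw [norm_smul, map_smul] at this
    simp only [norm_inv, norm_norm, inv_mul_cancel₀ hxn.ne', mul_one, smul_eq_mul] at this
    have hx' : β * ‖x‖ < g x := by
      calc β * ‖x‖ = ‖x‖ * β := mul_comm _ _
      _ < ‖x‖ * (‖x‖⁻¹ * g x) := by
            exact mul_lt_mul_of_pos_left this hxn
      _ = g x := by field_simp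
    simp only [hU, mem_setOf_eq]
    exact hx'
  -- K ∩ sphere misses frontier D
  have hKF : ∀ x ∈ K ∩ sphere (0:X) 1, x ∉ frontier D := by
    rintro x ⟨hxK, hxs⟩ hxF
    have hx1 : ‖x‖ = 1 := by simpa [mem_sphere_zero_iff_norm] using hxs
    have h1' : g x ≤ m - u := hFm x ⟨hxF, hxs⟩
    have h2' : β ≤ g x := by
      simp only [hK, mem_setOf_eq] at hxK
      rwa [hx1, mul_one] at hxK
    simp only [hβ] at h2'
    linarith
  -- K \ {0} is path connected
  have hc₀K : c₀ ∈ K := by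
    simp only [hK, mem_setOf_eq]; exact (hCsK c₀ hc₀Cs).le
  have hc₀ne : c₀ ≠ 0 := by
    intro h; rw [h] at hc₀n; simpa using hc₀n
  set P : Set X := K \ {0} with hP
  have hPpath : IsPathConnected P := by
    refine ⟨c₀, ⟨hc₀K, by simpa using hc₀ne⟩, ?_⟩
    rintro y ⟨hyK, hy0⟩
    have hy0' : y ≠ 0 := by simpa using hy0
    have hgc₀ : 0 < g c₀ := hgpos c₀ hc₀K hc₀ne
    have hgy : 0 < g y := hgpos y hyK hy0'
    refine JoinedIn.ofLine (f := fun t : ℝ => (1 - t) • c₀ + t • y) (by fun_prop)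
      (by simp) (by simp) ?_
    rintro - ⟨t, ht, rfl⟩
    rw [Set.mem_Icc] at ht
    have hmemK : (1 - t) • c₀ + t • y ∈ K :=
      hKconvex hc₀K hyK (by linarith) ht.1 (by ring)
    refine ⟨hmemK, ?_⟩
    have hgval : 0 < g ((1 - t) • c₀ + t • y) := by
      have h1t : 0 ≤ 1 - t := by linarith
      have hmin : min (g c₀) (g y) ≤ (1 - t) * g c₀ + t * g y := by
        rcases le_total (g c₀) (g y) with h | h
        · calc min (g c₀) (g y) = g c₀ := min_eq_left h
          _ = (1 - t) * g c₀ + t * g c₀ := by ring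
          _ ≤ (1 - t) * g c₀ + t * g y := by gcongr; exact ht.1
        · calc min (g c₀) (g y) = g y := min_eq_right h
          _ = (1 - t) * g y + t * g y := by ring
          _ ≤ (1 - t) * g c₀ + t * g y := by gcongr
      have : 0 < min (g c₀) (g y) := lt_min hgc₀ hgy
      calc (0:ℝ) < min (g c₀) (g y) := this
      _ ≤ (1 - t) * g c₀ + t * g y := hmin
      _ = g ((1 - t) • c₀ + t • y) := by simp [map_add, map_smul]
    simp only [mem_singleton_iff]
    intro h
    rw [h] at hgval
    simp at hgval
  -- T := K ∩ sphere is contained in interior D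
  set T : Set X := K ∩ sphere (0:X) 1 with hT
  have hTeq : T = (fun x : X => ‖x‖⁻¹ • x) '' P := by
    apply Set.Subset.antisymm
    · rintro x ⟨hxK, hxs⟩
      have hx1 : ‖x‖ = 1 := by simpa [mem_sphere_zero_iff_norm] using hxs
      have hx0 : x ≠ 0 := by intro h; rw [h] at hx1; simpa using hx1
      exact ⟨x, ⟨hxK, by simpa using hx0⟩, by simp [hx1]⟩
    · rintro - ⟨x, ⟨hxK, hx0⟩, rfl⟩
      have hx0' : x ≠ 0 := by simpa using hx0
      have hxn : (0:ℝ) < ‖x‖ := norm_pos_iff.2 hx0'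
      refine ⟨hKcone (by positivity) hxK, ?_⟩
      simp [mem_sphere_zero_iff_norm, norm_smul, inv_mul_cancel₀ hxn.ne']
  have hTpre : IsPreconnected T := by
    rw [hTeq]
    refine (hPpath.isConnected.isPreconnected).image _ ?_
    intro x hx
    have hx0 : x ≠ 0 := by simpa using hx.2
    exact (((continuousOn_id.norm).inv₀ (fun y hy => norm_ne_zero_iff.2
      (by simpa using hy.2))).smul continuousOn_id) x hx
  have hTsub : T ⊆ interior D := by
    set V : Set X := (closure D)ᶜ with hV
    have hTuv : T ⊆ interior D ∪ V := by
      intro x hx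
      have hxf : x ∉ frontier D := hKF x hx
      by_cases hxi : x ∈ interior D
      · left; exact hxi
      · right
        intro hxc
        exact hxf ⟨hxc, hxi⟩
    have hc₀T : c₀ ∈ T := ⟨hc₀K, by simpa [mem_sphere_zero_iff_norm] using hc₀n⟩
    by_contra hcon
    obtain ⟨z, hzT, hznot⟩ := not_subset.mp hcon
    have hzV : z ∈ V := by
      rcases hTuv hzT with h | h
      · exact absurd h hznot
      · exact h
    obtain ⟨w, hw⟩ := hTpre (interior D) V isOpen_interior (isClosed_closure.isOpen_compl)
      hTuv ⟨c₀, hc₀T, hc₀int⟩ ⟨z, hzT, hzV⟩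
    exact hw.2.2 (subset_closure (interior_subset hw.2.1))
  have hKD : ∀ x ∈ K, x ≠ 0 → x ∈ D := by
    intro x hxK hx0
    have hxn : (0:ℝ) < ‖x‖ := norm_pos_iff.2 hx0
    have hmem : ‖x‖⁻¹ • x ∈ T := by
      refine ⟨hKcone (by positivity) hxK, ?_⟩
      simp [mem_sphere_zero_iff_norm, norm_smul, inv_mul_cancel₀ hxn.ne']
    have : ‖x‖⁻¹ • x ∈ D := interior_subset (hTsub hmem)
    have := hDcone hxn.le this
    rwa [smul_smul, mul_inv_cancel₀ hxn.ne', one_smul] at this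
  -- the weakly compact section intersected with x₀ - K
  set W : Set X := (({x₀} : Set X) - D) ∩ A with hW
  set Q : Set X := {x : X | x₀ - x ∈ K} with hQ
  have hQclosed : IsClosed Q := by
    have hKclosed : IsClosed K := isClosed_le (by fun_prop) g.continuous
    exact hKclosed.preimage (continuous_const.sub continuous_id)
  have hQconvex : Convex ℝ Q := by
    intro x hx y hy a b ha hb hab
    simp only [hQ, mem_setOf_eq] at hx hy ⊢
    have key : a • (x₀ - x) + b • (x₀ - y) = (a + b) • x₀ - (a • x + b • y) := by
      rw [smul_sub, smul_sub, add_smul]; abel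
    have : x₀ - (a • x + b • y) = a • (x₀ - x) + b • (x₀ - y) := by
      rw [key, hab, one_smul]
    rw [this]
    exact hKconvex hx hy ha hb hab
  have hx₀W : x₀ ∈ W := by
    refine ⟨?_, hx₀⟩
    have : x₀ - 0 ∈ ({x₀} : Set X) - D := Set.sub_mem_sub rfl h0D
    simpa using this
  have hx₀Q : x₀ ∈ Q := by simp [hQ, h0K]
  set W' : Set X := W ∩ Q with hW'
  have hW'cpt : IsCompact (toWeakSpace ℝ X '' W') := by
    rw [hW', Set.image_inter (toWeakSpace ℝ X).injective]
    refine hcpt.inter_right ?_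
    have := hQconvex.toWeakSpace_closure (𝕜 := ℝ)
    rw [hQclosed.closure_eq] at this
    rw [this]
    exact isClosed_closure
  have hW'ne : (toWeakSpace ℝ X '' W').Nonempty := ⟨toWeakSpace ℝ X x₀,
    Set.mem_image_of_mem _ ⟨hx₀W, hx₀Q⟩⟩
  -- minimize g over W'
  set φ : WeakSpace ℝ X → ℝ := fun x => (topDualPairing ℝ X).flip x g with hφ
  have hφcont : Continuous φ := WeakBilin.eval_continuous _ g
  obtain ⟨w, hwmem, hwmin⟩ := hW'cpt.exists_isMinOn hW'ne hφcont.continuousOn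
  obtain ⟨xs, hxsW', hxsw⟩ := hwmem
  have hmin : ∀ a ∈ W', g xs ≤ g a := by
    intro a ha
    have := hwmin (Set.mem_image_of_mem _ ha)
    rw [← hxsw] at this
    exact this
  refine ⟨xs, ⟨hxsW'.1.1, hxsW'.1.2⟩, K, hKcone, hKadd, hCint, hxsW'.1.2, ?_⟩
  apply Set.Subset.antisymm
  · rintro v ⟨hv1, hv2⟩
    obtain ⟨a, ha, b, hb, rfl⟩ := hv1
    rw [mem_singleton_iff] at hb
    rw [hb] at *
    clear hb
    rw [Set.mem_neg] at hv2
    simp only [mem_singleton_iff]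
    by_contra hne
    have hk : xs - a ∈ K := by
      have : -(a - xs) = xs - a := by abel
      rwa [this] at hv2
    have hkne : xs - a ≠ 0 := fun h => hne (by
      rw [sub_eq_zero] at h ⊢
      exact h.symm)
    have hQa : a ∈ Q := by
      simp only [hQ, mem_setOf_eq]
      have : x₀ - a = (x₀ - xs) + (xs - a) := by abel
      rw [this]
      exact hKmemadd _ hxsW'.2 _ hk
    have hWa : a ∈ W := by
      refine ⟨?_, ha⟩
      have hxa : x₀ - a ∈ K := hQa
      have hxaD : x₀ - a ∈ D := by
        by_cases h : x₀ - a = 0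
        · rw [h]; exact h0D
        · exact hKD _ hxa h
      have : x₀ - (x₀ - a) ∈ ({x₀} : Set X) - D := Set.sub_mem_sub rfl hxaD
      simpa using this
    have hga : g a < g xs := by
      have h1' : 0 < g (xs - a) := hgpos _ hk hkne
      have : g xs - g a = g (xs - a) := (map_sub g xs a).symm
      linarith
    exact absurd (hmin a ⟨hWa, hQa⟩) (not_le.mpr hga)
  · intro v hv
    rw [mem_singleton_iff] at hv
    subst hv
    refine ⟨?_, ?_⟩
    · have : xs - xs ∈ A - ({xs} : Set X) := Set.sub_mem_sub hxsW'.1.2 rfl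
      simpa using this
    · rw [Set.mem_neg, neg_zero]
      exact h0K
end

section
/- Let X be a real normed space partially ordered by a nontrivial pointed convex cone C, and let A ⊆ X be a nonempty subset. Assume that (C, C_α) has the strict separation property for every 0 < α < 1. If A is weakly compact, then GHe(A, C) ≠ ∅. -/
open Set Metric Pointwise

open HenigPaper

variable {X : Type*} [NormedAddCommGroup X] [NormedSpace ℝ X]


/-- If `(C, C_α)` has the SSP for all `0 < α < 1` and `A` is nonempty and
weakly compact, then `GHe(A, C) ≠ ∅`. -/
theorem stmt14 (C : Set X) (hC : NontrivialCone C) (hpt : PointedCone' C)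
    (hconv : ConeConvex C) (A : Set X) (hA : A.Nonempty)
    (hssp : ∀ α : ℝ, 0 < α → α < 1 → SSP C (epsCone C α))
    (hcpt : WeaklyCompact A) : (GHe A C).Nonempty := by
  classical
  -- Use SSP for α = 1/2 to separate 0 from the closed convex set D.
  have hD0 := hssp (1/2) (by norm_num) (by norm_num)
  unfold SSP at hD0
  set D := closure (convexHull ℝ (C ∩ sphere (0 : X) 1) -
      convexHull ℝ ((frontier (epsCone C (1/2)) ∩ sphere (0 : X) 1) ∪ {(0 : X)})) with hDdef
  have hDconv : Convex ℝ D :=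
    ((convex_convexHull ℝ _).sub (convex_convexHull ℝ _)).closure
  obtain ⟨f, u, hfu, hub⟩ :=
    geometric_hahn_banach_point_closed hDconv isClosed_closure hD0
  have hf0 : f 0 = 0 := map_zero f
  have hu : 0 < u := by rw [hf0] at hfu; exact hfu
  -- C ∩ sphere ⊆ D, hence f > u on C ∩ sphere.
  have hsub : C ∩ sphere (0 : X) 1 ⊆ D := by
    intro c hc
    have h1 : c ∈ convexHull ℝ (C ∩ sphere (0 : X) 1) := subset_convexHull ℝ _ hc
    have h2 : (0 : X) ∈ convexHull ℝ
        ((frontier (epsCone C (1/2)) ∩ sphere (0 : X) 1) ∪ {(0 : X)}) :=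
      subset_convexHull ℝ _ (Or.inr rfl)
    have : c - 0 ∈ convexHull ℝ (C ∩ sphere (0 : X) 1) -
        convexHull ℝ ((frontier (epsCone C (1/2)) ∩ sphere (0 : X) 1) ∪ {(0 : X)}) :=
      Set.sub_mem_sub h1 h2
    rw [sub_zero] at this
    exact subset_closure this
  -- Key estimate: f x > u ‖x‖ for nonzero x ∈ C.
  have hkey : ∀ x ∈ C, x ≠ 0 → u * ‖x‖ < f x := by
    intro x hx hx0
    have hxn : 0 < ‖x‖ := norm_pos_iff.mpr hx0
    have hs : (‖x‖⁻¹ • x) ∈ C ∩ sphere (0 : X) 1 := by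
      refine ⟨hC.1 (inv_nonneg.mpr hxn.le) hx, ?_⟩
      rw [mem_sphere_zero_iff_norm, norm_smul, norm_inv, norm_norm,
        inv_mul_cancel₀ hxn.ne']
    have := hub _ (hsub hs)
    have hfs : f (‖x‖⁻¹ • x) = ‖x‖⁻¹ * f x := map_smul f _ x
    rw [hfs] at this
    have := (lt_div_iff₀' hxn).mp (by rwa [div_eq_inv_mul])
    linarith [this]
  -- The separating Bishop–Phelps cone.
  set K := BPCone f (u/2) with hKdef
  have hK0 : (0 : X) ∈ K := by simp [hKdef, BPCone, hf0]
  have hKcone : IsCone K := by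
    intro l hl x hx
    have hx' : u/2 * ‖x‖ ≤ f x := hx
    show u/2 * ‖l • x‖ ≤ f (l • x)
    rw [norm_smul, map_smul f l x, Real.norm_eq_abs, abs_of_nonneg hl]
    calc u/2 * (l * ‖x‖) = l * (u/2 * ‖x‖) := by ring
    _ ≤ l * f x := mul_le_mul_of_nonneg_left hx' hl
    _ = l • f x := rfl
  have hKconv : ConeConvex K := by
    apply Set.Subset.antisymm
    · rintro z ⟨x, hx, y, hy, rfl⟩
      have hx' : u/2 * ‖x‖ ≤ f x := hx
      have hy' : u/2 * ‖y‖ ≤ f y := hy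
      show u/2 * ‖x + y‖ ≤ f (x + y)
      rw [map_add]
      have htri : ‖x + y‖ ≤ ‖x‖ + ‖y‖ := norm_add_le x y
      nlinarith [htri, hu]
    · intro x hx
      exact ⟨x, hx, 0, hK0, add_zero x⟩
  have hKint : C \ {(0 : X)} ⊆ interior K := by
    intro x hx
    obtain ⟨hxC, hx0⟩ := hx
    have hx0' : x ≠ 0 := hx0
    have hxn : 0 < ‖x‖ := norm_pos_iff.mpr hx0'
    rw [mem_interior]
    refine ⟨{y : X | u/2 * ‖y‖ < f y}, fun y hy => le_of_lt (α := ℝ) hy, ?_, ?_⟩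
    · exact isOpen_lt (by continuity) f.continuous
    · have := hkey x hxC hx0'
      have : u/2 * ‖x‖ < u * ‖x‖ := by nlinarith
      exact lt_trans this (hkey x hxC hx0')
  -- Minimize f over the weakly compact set A.
  have hgc : Continuous fun w : WeakSpace ℝ X => f ((toWeakSpace ℝ X).symm w) := by
    have := WeakBilin.eval_continuous ((topDualPairing ℝ X).flip) f
    exact this
  obtain ⟨w0, hw0, hmin⟩ := hcpt.exists_isMinOn (hA.image _) hgc.continuousOn
  obtain ⟨x0, hx0A, rfl⟩ := hw0
  have hmin' : ∀ a ∈ A, f x0 ≤ f a := by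
    intro a ha
    have := hmin (Set.mem_image_of_mem _ ha)
    simpa using this
  refine ⟨x0, K, hKcone, hKconv, hKint, hx0A, ?_⟩
  apply Set.Subset.antisymm
  · rintro y ⟨hy1, hy2⟩
    obtain ⟨a, ha, b, hb, rfl⟩ := hy1
    have hb' : b = x0 := hb
    rw [hb'] at hy2 ⊢
    rw [Set.mem_neg] at hy2
    have hK' : u/2 * ‖-(a - x0)‖ ≤ f (-(a - x0)) := hy2
    rw [norm_neg, map_neg, map_sub] at hK'
    have hle : f x0 ≤ f a := hmin' a ha
    have hn : ‖a - x0‖ ≤ 0 := by nlinarith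
    have : a - x0 = 0 := by
      rw [← norm_le_zero_iff]
      exact hn
    simpa using this
  · intro y hy
    rw [Set.mem_singleton_iff] at hy
    subst hy
    constructor
    · exact ⟨x0, hx0A, x0, rfl, sub_self x0⟩
    · rw [Set.mem_neg, neg_zero]; exact hK0
end

section
/- Let X be a real normed space partially ordered by a nontrivial pointed convex cone C, and let A ⊆ X. Assume that C is closed and has a bounded base, and that there exists 0 < δ < 1 such that the section A ∩ (−C_δ) is weakly compact. If 0 ∈ Min(A, C), then for every 0 < ε < 1 there exists a natural number n_ε such that A ∩ (−C_{1/n_ε}) ⊆ A ∩ εB_X. -/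
open Set Metric Pointwise

open HenigPaper

variable {X : Type*} [NormedAddCommGroup X] [NormedSpace ℝ X]


section Aux

lemma aux_convex {C : Set X} (hC : IsCone C) (h : ConeConvex C) : Convex ℝ C := by
  intro x hx y hy a b ha hb _
  have h1 : a • x ∈ C := hC ha hx
  have h2 : b • y ∈ C := hC hb hy
  have : a • x + b • y ∈ C + C := Set.add_mem_add h1 h2
  rwa [h] at this

lemma aux_epsCone_mono {C : Set X} {a b : ℝ} (h : a ≤ b) : epsCone C a ⊆ epsCone C b := by
  rintro y ⟨l, hl, s, hs, hy⟩
  exact ⟨l, hl, s, le_trans hs h, hy⟩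

lemma aux_functional {C : Set X} (hbb : HasBoundedBase C) :
    ∃ (f : X →L[ℝ] ℝ) (α : ℝ), 0 < α ∧ ∀ x ∈ C, α * ‖x‖ ≤ f x := by
  obtain ⟨B, ⟨hBne, hBconv, hBC, h0B, hrep⟩, hbd⟩ := hbb
  obtain ⟨f, u, hfu, hu0⟩ :=
    geometric_hahn_banach_closed_point hBconv.closure isClosed_closure h0B
  have hu : u < 0 := by simpa using hu0
  obtain ⟨M, hM⟩ := isBounded_iff_forall_norm_le.1 hbd
  set M' : ℝ := max M 1 with hM'def
  have hM'pos : (0 : ℝ) < M' := lt_of_lt_of_le one_pos (le_max_right _ _)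
  refine ⟨-f, (-u) / M', div_pos (by linarith) hM'pos, ?_⟩
  intro x hx
  rcases eq_or_ne x 0 with rfl | hx0
  · simp
  obtain ⟨⟨t, b⟩, ⟨ht, hb, hxe⟩, -⟩ := hrep x hx hx0
  have hfb : f b < u := hfu b (subset_closure hb)
  have hnb : ‖b‖ ≤ M' := le_trans (hM b hb) (le_max_left _ _)
  have hxn : ‖x‖ = t * ‖b‖ := by
    rw [hxe, norm_smul, Real.norm_eq_abs, abs_of_pos ht]
  have hfx : (-f) x = t * (-(f b)) := by
    rw [hxe]
    simp only [ContinuousLinearMap.neg_apply, map_smul, smul_eq_mul]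
  rw [hfx, hxn]
  have hdiv : (-u) / M' * M' = -u := div_mul_cancel₀ _ (ne_of_gt hM'pos)
  have hα : (0 : ℝ) < (-u) / M' := div_pos (by linarith) hM'pos
  nlinarith [norm_nonneg b, mul_le_mul_of_nonneg_left hnb (le_of_lt hα)]

lemma weak_eval_cont (g : X →L[ℝ] ℝ) :
    Continuous fun w : WeakSpace ℝ X => g ((toWeakSpace ℝ X).symm w) :=
  WeakBilin.eval_continuous ((topDualPairing ℝ X).flip) g

end Aux

set_option maxHeartbeats 1000000 in
/-- If `C` is a closed cone with a bounded base, the section `A ∩ (-C_δ)` is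
weakly compact for some `0 < δ < 1`, and `0 ∈ Min(A,C)`, then for every `0 < ε < 1` there is
`n_ε ∈ ℕ` with `A ∩ (-C_{1/n_ε}) ⊆ A ∩ ε B_X`. -/
theorem stmt15 (C : Set X) (hC : NontrivialCone C) (hpt : PointedCone' C)
    (hconv : ConeConvex C) (hcl : IsClosed C) (hbb : HasBoundedBase C) (A : Set X)
    (δ : ℝ) (h0 : 0 < δ) (h1 : δ < 1)
    (hcpt : WeaklyCompact (A ∩ (-(epsCone C δ))))
    (hmin : (0 : X) ∈ MinSet A C) :
    ∀ ε : ℝ, 0 < ε → ε < 1 →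
      ∃ n : ℕ, 0 < n ∧
        A ∩ (-(epsCone C (1 / (n : ℝ)))) ⊆ A ∩ closedBall (0 : X) ε := by
  intro ε hε hε1
  by_contra hcon
  -- counterexamples for every m
  have h' : ∀ m : ℕ, 0 < m → ∃ y, y ∈ A ∩ -(epsCone C (1 / (m : ℝ))) ∧
      y ∉ A ∩ closedBall (0 : X) ε := by
    intro m hm
    have hns : ¬ (A ∩ -(epsCone C (1 / (m : ℝ))) ⊆ A ∩ closedBall (0 : X) ε) :=
      fun hs => hcon ⟨m, hm, hs⟩
    obtain ⟨y, hy1, hy2⟩ := Set.not_subset.1 hns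
    exact ⟨y, hy1, hy2⟩
  -- the strictly positive functional from the bounded base
  obtain ⟨f, α, hα, hf⟩ := aux_functional hbb
  -- C ∩ sphere is nonempty
  obtain ⟨c₀, hc₀C, hc₀0⟩ := exists_of_ssubset hC.2.1
  have hc₀ne : c₀ ≠ 0 := by simpa using hc₀0
  have hS : (C ∩ sphere (0 : X) 1).Nonempty := by
    refine ⟨‖c₀‖⁻¹ • c₀, hC.1 (inv_nonneg.2 (norm_nonneg _)) hc₀C, ?_⟩
    rw [mem_sphere_zero_iff_norm, norm_smul, norm_inv, norm_norm,
      inv_mul_cancel₀ (norm_ne_zero_iff.2 hc₀ne)]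
  -- choose a large threshold n₀
  obtain ⟨n₀, hn₀⟩ := exists_nat_ge (max (max (1 / δ) 4) (4 * ‖f‖ / α))
  set n : ℕ → ℕ := fun k => n₀ + 1 + k with hn
  have hnpos : ∀ k, 0 < n k := fun k => by simp only [hn]; omega
  set N : ℕ → ℝ := fun k => ((n k : ℕ) : ℝ) with hN
  have hN0 : ∀ k, (0 : ℝ) < N k := fun k => by
    simp only [hN]; exact_mod_cast hnpos k
  have hNge : ∀ k, (n₀ : ℝ) ≤ N k := fun k => by
    have h : n₀ ≤ n k := by simp only [hn]; omega
    simp only [hN]; exact_mod_cast h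
  have hN4 : ∀ k, (4 : ℝ) ≤ N k := fun k =>
    le_trans (le_trans (le_max_right _ _) (le_max_left _ _)) (le_trans hn₀ (hNge k))
  have hNf : ∀ k, 4 * ‖f‖ / α ≤ N k := fun k =>
    le_trans (le_max_right _ _) (le_trans hn₀ (hNge k))
  have hNδ : ∀ k, 1 / δ ≤ N k := fun k =>
    le_trans (le_trans (le_max_left _ _) (le_max_left _ _)) (le_trans hn₀ (hNge k))
  -- the sequence of counterexamples
  set x : ℕ → X := fun k => (h' (n k) (hnpos k)).choose with hx
  have hxspec : ∀ k, x k ∈ A ∩ -(epsCone C (1 / N k)) ∧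
      x k ∉ A ∩ closedBall (0 : X) ε := fun k => (h' (n k) (hnpos k)).choose_spec
  have hxA : ∀ k, x k ∈ A := fun k => (hxspec k).1.1
  have hxC : ∀ k, -(x k) ∈ epsCone C (1 / N k) := fun k => Set.mem_neg.1 (hxspec k).1.2
  have hxnorm : ∀ k, ε < ‖x k‖ := by
    intro k
    have h2 := (hxspec k).2
    by_contra hle
    push_neg at hle
    exact h2 ⟨hxA k, by simpa [mem_closedBall, dist_zero_right] using hle⟩
  -- key per-index estimates
  have key : ∀ k : ℕ, ∃ l : ℝ, ε / 2 < l ∧ f (x k) ≤ -(l * (α / 2)) ∧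
      ∀ g : X →L[ℝ] ℝ, (∀ c ∈ C, 0 ≤ g c) → g (x k) ≤ 2 * l * ‖g‖ / N k := by
    intro k
    obtain ⟨l, hl0, s, hs, heq⟩ := hxC k
    rw [Set.mem_setOf_eq] at hs
    have h2N : infDist s (C ∩ sphere (0 : X) 1) < 2 / N k :=
      lt_of_le_of_lt hs (by
        rw [div_lt_div_iff₀ (hN0 k) (hN0 k)]
        nlinarith [hN0 k])
    obtain ⟨c, hcmem, hdist⟩ := (infDist_lt_iff hS).1 h2N
    have hcC : c ∈ C := hcmem.1
    have hc1 : ‖c‖ = 1 := mem_sphere_zero_iff_norm.1 hcmem.2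
    have hsc : ‖s - c‖ < 2 / N k := by rwa [← dist_eq_norm]
    have h2Nle : 2 / N k ≤ 1 / 2 := by
      rw [div_le_div_iff₀ (hN0 k) (by norm_num)]
      linarith [hN4 k]
    have hsn : ‖s‖ ≤ 3 / 2 := by
      have : ‖s‖ ≤ ‖c‖ + ‖s - c‖ := by
        calc ‖s‖ = ‖c + (s - c)‖ := by rw [add_sub_cancel]
          _ ≤ ‖c‖ + ‖s - c‖ := norm_add_le _ _
      linarith
    have hxk : ‖x k‖ = l * ‖s‖ := by
      rw [← norm_neg (x k), heq, norm_smul, Real.norm_eq_abs, abs_of_nonneg hl0]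
    have hεl : ε / 2 < l := by
      nlinarith [hxnorm k, mul_le_mul_of_nonneg_left hsn hl0]
    -- estimate f s
    have hfc : α ≤ f c := by
      have := hf c hcC
      rwa [hc1, mul_one] at this
    have hfsc : |f (s - c)| ≤ ‖f‖ * ‖s - c‖ := by
      rw [← Real.norm_eq_abs]
      exact f.le_opNorm _
    have hff : ‖f‖ * ‖s - c‖ ≤ α / 2 := by
      have h1 : ‖f‖ * ‖s - c‖ ≤ ‖f‖ * (2 / N k) :=
        mul_le_mul_of_nonneg_left hsc.le (norm_nonneg f)
      have h2 : ‖f‖ * (2 / N k) ≤ α / 2 := by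
        have hk' := hNf k
        rw [div_le_iff₀ hα] at hk'
        have he : ‖f‖ * (2 / N k) = 2 * ‖f‖ / N k := by ring
        rw [he, div_le_div_iff₀ (hN0 k) (by norm_num : (0:ℝ) < 2)]
        nlinarith
      linarith
    have hfs : α / 2 ≤ f s := by
      have : f s - f c = f (s - c) := by rw [map_sub]
      have habs := abs_le.1 hfsc
      linarith
    have hfx : f (x k) ≤ -(l * (α / 2)) := by
      have h1 : f (-(x k)) = l * f s := by rw [heq, map_smul, smul_eq_mul]
      have h2 : f (-(x k)) = -(f (x k)) := map_neg f (x k)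
      have h3 : l * (α / 2) ≤ l * f s := mul_le_mul_of_nonneg_left hfs hl0
      linarith
    refine ⟨l, hεl, hfx, ?_⟩
    intro g hg
    have hgc : 0 ≤ g c := hg c hcC
    have hgsc : |g (s - c)| ≤ ‖g‖ * ‖s - c‖ := by
      rw [← Real.norm_eq_abs]
      exact g.le_opNorm _
    have h1 : g (-(x k)) = l * g s := by rw [heq, map_smul, smul_eq_mul]
    have h2 : g (-(x k)) = -(g (x k)) := map_neg g (x k)
    have h3 : g s - g c = g (s - c) := by rw [map_sub]
    have h4 : -(‖g‖ * (2 / N k)) ≤ g s := by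
      have := abs_le.1 hgsc
      have h5 : ‖g‖ * ‖s - c‖ ≤ ‖g‖ * (2 / N k) :=
        mul_le_mul_of_nonneg_left hsc.le (norm_nonneg g)
      linarith
    have h6 : -(l * g s) ≤ l * (‖g‖ * (2 / N k)) := by
      have := mul_le_mul_of_nonneg_left h4 hl0
      linarith [mul_le_mul_of_nonneg_left h4 hl0]
    calc g (x k) = -(l * g s) := by linarith [h1, h2]
      _ ≤ l * (‖g‖ * (2 / N k)) := h6
      _ = 2 * l * ‖g‖ / N k := by ring
  -- the sequence lies in the weakly compact section
  have hδmem : ∀ k, x k ∈ A ∩ -(epsCone C δ) := by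
    intro k
    refine ⟨hxA k, Set.mem_neg.2 (aux_epsCone_mono ?_ (hxC k))⟩
    rw [div_le_iff₀ (hN0 k)]
    have := hNδ k
    rw [div_le_iff₀ h0] at this
    nlinarith
  set u : ℕ → WeakSpace ℝ X := fun k => toWeakSpace ℝ X (x k) with hu
  have hle : Filter.map u Filter.atTop ≤
      Filter.principal (toWeakSpace ℝ X '' (A ∩ -(epsCone C δ))) := by
    rw [Filter.le_principal_iff, Filter.mem_map]
    exact Filter.Eventually.of_forall fun k => Set.mem_image_of_mem _ (hδmem k)
  obtain ⟨w, hwS, hw⟩ := hcpt hle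
  obtain ⟨z, hz, hzw⟩ := hwS
  have hzA : z ∈ A := hz.1
  -- cluster-point transfer for pairs of functionals
  have hclus2 : ∀ g₁ g₂ : X →L[ℝ] ℝ,
      MapClusterPt (g₁ z, g₂ z) Filter.atTop (fun k => (g₁ (x k), g₂ (x k))) := by
    intro g₁ g₂
    have hmcp : MapClusterPt w Filter.atTop u := hw
    have hcont : Continuous fun w : WeakSpace ℝ X =>
        (g₁ ((toWeakSpace ℝ X).symm w), g₂ ((toWeakSpace ℝ X).symm w)) :=
      (weak_eval_cont g₁).prodMk (weak_eval_cont g₂)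
    have h2 := hmcp.continuousAt_comp hcont.continuousAt
    have he1 : (g₁ ((toWeakSpace ℝ X).symm w), g₂ ((toWeakSpace ℝ X).symm w)) =
        (g₁ z, g₂ z) := by rw [← hzw]; simp
    have he2 : (fun w : WeakSpace ℝ X =>
        (g₁ ((toWeakSpace ℝ X).symm w), g₂ ((toWeakSpace ℝ X).symm w))) ∘ u =
        fun k => (g₁ (x k), g₂ (x k)) := by
      funext k
      simp [hu]
    rwa [he1, he2] at h2
  by_cases hzC : z ∈ -C
  · -- then z = 0, contradiction with f-values staying away from 0
    have hz0 : z = 0 := by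
      have hzsub : z ∈ (A - ({(0 : X)} : Set X)) ∩ (-C) := by
        refine ⟨?_, hzC⟩
        rw [Set.mem_sub]
        exact ⟨z, hzA, 0, rfl, sub_zero z⟩
      rw [hmin.2] at hzsub
      simpa using hzsub
    have hfz : f z = 0 := by rw [hz0, map_zero]
    have hnb : {p : ℝ × ℝ | -(ε * (α / 4)) < p.1} ∈ nhds (f z, f z) := by
      refine IsOpen.mem_nhds (isOpen_lt continuous_const continuous_fst) ?_
      simp only [Set.mem_setOf_eq, hfz]
      nlinarith
    have hfr := mapClusterPt_iff_frequently.1 (hclus2 f f) _ hnb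
    obtain ⟨k, hk⟩ := hfr.exists
    obtain ⟨l, hl, hfx, -⟩ := key k
    simp only [Set.mem_setOf_eq] at hk
    nlinarith
  · -- separate z from -C
    have h2z : -z ∉ C := fun hcontra => hzC (Set.mem_neg.2 hcontra)
    obtain ⟨g, v, hgC, hvz⟩ :=
      geometric_hahn_banach_closed_point (aux_convex hC.1 hconv) hcl h2z
    have h0C : (0 : X) ∈ C := hC.2.1.1 rfl
    have hv0 : 0 < v := by have := hgC 0 h0C; simpa using this
    have hgle : ∀ a ∈ C, g a ≤ 0 := by
      intro a ha
      by_contra hpos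
      push_neg at hpos
      have ht : (0 : ℝ) < (v + 1) / g a := by positivity
      have hmem : ((v + 1) / g a) • a ∈ C := hC.1 ht.le ha
      have := hgC _ hmem
      rw [map_smul, smul_eq_mul, div_mul_cancel₀ _ (ne_of_gt hpos)] at this
      linarith
    set h : X →L[ℝ] ℝ := -g with hhdef
    have hhC : ∀ c ∈ C, 0 ≤ h c := by
      intro c hc
      simp only [hhdef, ContinuousLinearMap.neg_apply]
      linarith [hgle c hc]
    have hhz : v < h z := by
      have : g (-z) = -(g z) := map_neg g z
      simp only [hhdef, ContinuousLinearMap.neg_apply]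
      linarith
    set Λ : ℝ := 2 * (|f z| + 1) / α with hΛdef
    have hΛ : 0 < Λ := by positivity
    obtain ⟨K, hK⟩ := exists_nat_ge (2 * Λ * ‖h‖ / v)
    have hnb : {p : ℝ × ℝ | f z - 1 < p.1 ∧ v < p.2} ∈ nhds (f z, h z) := by
      refine IsOpen.mem_nhds ?_ ⟨by linarith, hhz⟩
      rw [Set.setOf_and]
      exact (isOpen_lt continuous_const continuous_fst).inter
        (isOpen_lt continuous_const continuous_snd)
    have hfr := mapClusterPt_iff_frequently.1 (hclus2 f h) _ hnb
    obtain ⟨k, hkmem, hkK⟩ := (hfr.and_eventually (Filter.eventually_ge_atTop K)).exists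
    simp only [Set.mem_setOf_eq] at hkmem
    obtain ⟨hk1, hk2⟩ := hkmem
    obtain ⟨l, hl, hfx, hgx⟩ := key k
    -- l < Λ
    have hlΛ : l ≤ Λ := by
      have habs : -(|f z|) ≤ f z := neg_abs_le (f z)
      have : l * (α / 2) ≤ |f z| + 1 := by nlinarith
      rw [hΛdef]
      rw [le_div_iff₀ hα]
      nlinarith
    have hhx := hgx h hhC
    -- numeric contradiction
    have hNK : (K : ℝ) ≤ N k := by
      have h : K ≤ n k := by simp only [hn]; omega
      simp only [hN]; exact_mod_cast h
    have hKv : 2 * Λ * ‖h‖ ≤ (K : ℝ) * v := by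
      rw [div_le_iff₀ hv0] at hK
      linarith
    have h2l : 2 * l * ‖h‖ ≤ 2 * Λ * ‖h‖ := by
      nlinarith [norm_nonneg h]
    have hfin : 2 * l * ‖h‖ / N k ≤ v := by
      rw [div_le_iff₀ (hN0 k)]
      calc 2 * l * ‖h‖ ≤ (K : ℝ) * v := le_trans h2l hKv
        _ ≤ N k * v := mul_le_mul_of_nonneg_right hNK hv0.le
        _ = v * N k := mul_comm _ _
    linarith
end
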